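/- arXiv:0903.0089 — 5 statements merged into one kernel-verified Lean document; each statement's English description precedes it below -/
import Mathlib

section
/- Let $p>1$, $b>0$, $a>0$. If $F\in C^2([a,\infty))$ satisfies $F(t)\ge 0$, $F'(t)\ge 0$, $F''(t)\ge b\,F(t)^p$ for all $t$, and moreover $F'(a)^2 \ge \tfrac{2b}{p+1} F(a)^{p+1}$ and $F(a)>0$, then $F$ cannot be defined (finite) on all of $[a,\infty)$; i.e., there is no global $C^2$ solution satisfying these inequalities. -/
open Real Set

/-- Constant-kernel Kato lemma: `F'' ≥ b F^p`, `p > 1`, with large initial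
derivative and positive initial datum, admits no global solution on `[a, ∞)`. -/
theorem stmt_0 (p b a : ℝ) (hp : 1 < p) (hb : 0 < b) (ha : 0 < a)
    (F F' F'' : ℝ → ℝ)
    (hd1 : ∀ t ∈ Ici a, HasDerivAt F (F' t) t)
    (hd2 : ∀ t ∈ Ici a, HasDerivAt F' (F'' t) t)
    (hF : ∀ t ∈ Ici a, 0 ≤ F t)
    (hF' : ∀ t ∈ Ici a, 0 ≤ F' t)
    (hF'' : ∀ t ∈ Ici a, b * F t ^ p ≤ F'' t)
    (hFa : 0 < F a)
    (hinit : 2 * b / (p + 1) * F a ^ (p + 1) ≤ F' a ^ 2) :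
    False := by
  have hp1 : (0:ℝ) < p + 1 := by linarith
  -- monotonicity helper
  have mono_aux : ∀ (G G' : ℝ → ℝ), (∀ t ∈ Ici a, HasDerivAt G (G' t) t) →
      (∀ t ∈ Ici a, 0 ≤ G' t) → MonotoneOn G (Ici a) := by
    intro G G' hd hpos
    apply monotoneOn_of_deriv_nonneg (convex_Ici a)
    · exact fun t ht => (hd t ht).continuousAt.continuousWithinAt
    · intro t ht
      rw [interior_Ici] at ht
      exact (hd t (mem_Ici.mpr (mem_Ioi.mp ht).le)).differentiableAt.differentiableWithinAt
    · intro t ht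
      rw [interior_Ici] at ht
      rw [(hd t (mem_Ici.mpr (mem_Ioi.mp ht).le)).deriv]
      exact hpos t (mem_Ici.mpr (mem_Ioi.mp ht).le)
  have anti_aux : ∀ (G G' : ℝ → ℝ), (∀ t ∈ Ici a, HasDerivAt G (G' t) t) →
      (∀ t ∈ Ici a, G' t ≤ 0) → AntitoneOn G (Ici a) := by
    intro G G' hd hneg
    apply antitoneOn_of_deriv_nonpos (convex_Ici a)
    · exact fun t ht => (hd t ht).continuousAt.continuousWithinAt
    · intro t ht
      rw [interior_Ici] at ht
      exact (hd t (mem_Ici.mpr (mem_Ioi.mp ht).le)).differentiableAt.differentiableWithinAt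
    · intro t ht
      rw [interior_Ici] at ht
      rw [(hd t (mem_Ici.mpr (mem_Ioi.mp ht).le)).deriv]
      exact hneg t (mem_Ici.mpr (mem_Ioi.mp ht).le)
  have hFmono := mono_aux F F' hd1 hF'
  have hFpos : ∀ t ∈ Ici a, 0 < F t := fun t ht =>
    lt_of_lt_of_le hFa (hFmono self_mem_Ici ht ht)
  set c : ℝ := 2 * b / (p + 1) with hc_def
  have hc : 0 < c := by positivity
  have hcp : c * (p + 1) = 2 * b := by
    rw [hc_def, div_mul_cancel₀ _ hp1.ne']
  -- the energy is nondecreasing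
  have hEd : ∀ t ∈ Ici a, HasDerivAt (fun s => F' s ^ 2 - c * F s ^ (p+1))
      (2 * F' t * F'' t - c * (F' t * (p+1) * F t ^ p)) t := by
    intro t ht
    have h1 : HasDerivAt (fun s => F' s ^ 2) (2 * F' t * F'' t) t := by
      have := (hd2 t ht).pow 2
      norm_num at this
      simpa [mul_comm, mul_assoc, mul_left_comm] using (show HasDerivAt (fun s => F' s ^ 2) _ t from this)
    have h2 : HasDerivAt (fun s => F s ^ (p+1)) (F' t * (p+1) * F t ^ p) t := by
      have h := (hd1 t ht).rpow_const (p := p + 1) (Or.inl (hFpos t ht).ne')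
      rw [show p + 1 - 1 = p by ring] at h
      exact h
    exact h1.sub (h2.const_mul c)
  have hEmono := mono_aux _ _ hEd (by
    intro t ht
    have h1 := hF'' t ht
    have h2 := hF' t ht
    have h3 : c * (p+1) * (F' t * F t ^ p) = 2 * b * (F' t * F t ^ p) := by
      rw [hcp]
    nlinarith [mul_nonneg h2 (sub_nonneg.mpr h1), h3])
  have hE : ∀ t ∈ Ici a, c * F t ^ (p+1) ≤ F' t ^ 2 := by
    intro t ht
    have h1 := hEmono self_mem_Ici ht ht
    simp only at h1
    linarith
  -- pointwise lower bound on F'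
  have key : ∀ t ∈ Ici a, Real.sqrt c * F t ^ ((p+1)/2) ≤ F' t := by
    intro t ht
    have h1 : (Real.sqrt c * F t ^ ((p+1)/2))^2 = c * F t ^ (p+1) := by
      rw [mul_pow, Real.sq_sqrt hc.le, ← Real.rpow_natCast (F t ^ ((p+1)/2)) 2,
          ← Real.rpow_mul (hF t ht)]
      norm_num
    have h2 := hE t ht
    nlinarith [hF' t ht, mul_nonneg (Real.sqrt_nonneg c)
      (Real.rpow_nonneg (hF t ht) ((p+1)/2))]
  -- comparison function H = F^{-r} + K t is nonincreasing
  set r : ℝ := (p-1)/2 with hr_def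
  have hr : 0 < r := by rw [hr_def]; linarith
  set K : ℝ := r * Real.sqrt c with hK_def
  have hK : 0 < K := mul_pos hr (Real.sqrt_pos.mpr hc)
  have hHd : ∀ t ∈ Ici a, HasDerivAt (fun s => F s ^ (-r) + K * s)
      (F' t * (-r) * F t ^ (-r - 1) + K) t := by
    intro t ht
    have h := ((hd1 t ht).rpow_const (p := -r) (Or.inl (hFpos t ht).ne')).add
      ((hasDerivAt_id t).const_mul K)
    simpa using (show HasDerivAt (fun s => F s ^ (-r) + K * s) _ t from h)
  have hHanti := anti_aux _ _ hHd (by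
    intro t ht
    have h3 : 0 < F t ^ (-r-1) := Real.rpow_pos_of_pos (hFpos t ht) _
    have h4 := key t ht
    have hpow : F t ^ (-r-1) * F t ^ ((p+1)/2) = 1 := by
      rw [← Real.rpow_add (hFpos t ht)]
      have : (-r-1) + (p+1)/2 = 0 := by rw [hr_def]; ring
      rw [this, Real.rpow_zero]
    have h5 : r * F t ^ (-r-1) * (Real.sqrt c * F t ^ ((p+1)/2)) = K := by
      calc r * F t ^ (-r-1) * (Real.sqrt c * F t ^ ((p+1)/2))
          = r * Real.sqrt c * (F t ^ (-r-1) * F t ^ ((p+1)/2)) := by ring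
        _ = K := by rw [hpow, mul_one, hK_def]
    have h6 := mul_le_mul_of_nonneg_left h4 (mul_nonneg hr.le h3.le)
    nlinarith [h5, h6])
  -- evaluate at a late time to get a contradiction
  set t0 : ℝ := a + F a ^ (-r) / K + 1 with ht0_def
  have hFar : 0 < F a ^ (-r) := Real.rpow_pos_of_pos hFa _
  have ht0 : a ≤ t0 := by
    have : 0 ≤ F a ^ (-r) / K := le_of_lt (div_pos hFar hK)
    rw [ht0_def]; linarith
  have h7 := hHanti self_mem_Ici (mem_Ici.mpr ht0) ht0
  simp only at h7
  have h8 : 0 < F t0 ^ (-r) := Real.rpow_pos_of_pos (hFpos t0 ht0) _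
  have h9 : K * (F a ^ (-r) / K) = F a ^ (-r) := mul_div_cancel₀ _ hK.ne'
  rw [ht0_def] at h7
  nlinarith [h7, h8, h9, hK]
end

section
/- Let $p>1$, $\Gamma\in C^1([a,\infty))$ nonnegative and nonincreasing with $\Gamma(a)>0$, and suppose $F\in C^2([a,b))$ satisfies $F\ge0$, $F'\ge0$, $F''\ge\Gamma F^p$, and $F'(a)^2\ge\frac{2}{p+1}\Gamma(a)F(a)^{p+1}$ on $[a,b)$. Then for all $t\in[a,b)$ one has the first-order inequality $F'(t)\ge\sqrt{\tfrac{2}{p+1}}\,\Gamma(t)^{1/2}F(t)^{(p+1)/2}$. -/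
open Real Set

/-- Energy step of the generalized Kato lemma: under `F'' ≥ Γ F^p` with
nonincreasing nonnegative `Γ` and a large initial derivative, one has the
pointwise first-order bound `F' ≥ √(2/(p+1)) Γ^{1/2} F^{(p+1)/2}` on `[a,b)`. -/
theorem stmt_2 (p a b : ℝ) (hp : 1 < p) (hab : a < b)
    (Γ Γ' : ℝ → ℝ)
    (hΓd : ∀ t ∈ Ici a, HasDerivAt Γ (Γ' t) t)
    (hΓ : ∀ t ∈ Ici a, 0 ≤ Γ t)
    (hΓa : 0 < Γ a)
    (hΓ' : ∀ t ∈ Ici a, Γ' t ≤ 0)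
    (F F' F'' : ℝ → ℝ)
    (hd1 : ∀ t ∈ Ico a b, HasDerivAt F (F' t) t)
    (hd2 : ∀ t ∈ Ico a b, HasDerivAt F' (F'' t) t)
    (hF : ∀ t ∈ Ico a b, 0 ≤ F t)
    (hF' : ∀ t ∈ Ico a b, 0 ≤ F' t)
    (hF'' : ∀ t ∈ Ico a b, Γ t * F t ^ p ≤ F'' t)
    (hkin : 2 / (p + 1) * Γ a * F a ^ (p + 1) ≤ F' a ^ 2) :
    ∀ t ∈ Ico a b,
      Real.sqrt (2 / (p + 1)) * Real.sqrt (Γ t) * F t ^ ((p + 1) / 2) ≤ F' t := by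
  have hp1 : (0:ℝ) < p + 1 := by linarith
  set E : ℝ → ℝ := fun t => F' t ^ 2 - 2 / (p + 1) * (Γ t * F t ^ (p + 1)) with hE
  set E' : ℝ → ℝ := fun t =>
    2 * F' t ^ 1 * F'' t -
      2 / (p + 1) * (Γ' t * F t ^ (p + 1) + Γ t * (F' t * (p + 1) * F t ^ (p + 1 - 1)))
    with hE'
  have hEd : ∀ t ∈ Ico a b, HasDerivAt E (E' t) t := by
    intro t ht
    have h1 : HasDerivAt (fun t => F' t ^ 2) (2 * F' t ^ 1 * F'' t) t := by
      simpa using (hd2 t ht).fun_pow 2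
    have h2 : HasDerivAt (fun t => F t ^ (p + 1))
        (F' t * (p + 1) * F t ^ (p + 1 - 1)) t :=
      (hd1 t ht).rpow_const (p := p + 1) (Or.inr (by linarith))
    have h3 := ((hΓd t (mem_Ici.2 ht.1)).mul h2).const_mul (2 / (p + 1))
    simpa [hE, hE'] using h1.fun_sub h3
  have hEmono : MonotoneOn E (Ico a b) := by
    apply monotoneOn_of_deriv_nonneg (convex_Ico a b)
    · exact fun t ht => (hEd t ht).continuousAt.continuousWithinAt
    · intro t ht
      rw [interior_Ico] at ht
      exact ((hEd t ⟨le_of_lt ht.1, ht.2⟩).differentiableAt).differentiableWithinAt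
    · intro t ht
      rw [interior_Ico] at ht
      have ht' : t ∈ Ico a b := ⟨le_of_lt ht.1, ht.2⟩
      rw [(hEd t ht').deriv]
      have hFp : (0:ℝ) ≤ F t ^ (p + 1) := Real.rpow_nonneg (hF t ht') _
      have h1 := hΓ' t (mem_Ici.2 ht'.1)
      have h2 := hF'' t ht'
      have h3 := hF' t ht'
      have h4 := hΓ t (mem_Ici.2 ht'.1)
      have hdiv : (0:ℝ) < 2 / (p + 1) := by positivity
      have key : E' t = 2 * F' t * (F'' t - Γ t * F t ^ p)
          - 2 / (p + 1) * (Γ' t * F t ^ (p + 1)) := by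
        have : F t ^ (p + 1 - 1) = F t ^ p := by norm_num
        simp only [hE', this]
        field_simp
        ring
      rw [key]
      have t1 : 0 ≤ 2 * F' t * (F'' t - Γ t * F t ^ p) := by
        apply mul_nonneg (by linarith) (by linarith)
      have t2 : Γ' t * F t ^ (p + 1) ≤ 0 := mul_nonpos_of_nonpos_of_nonneg h1 hFp
      nlinarith
  intro t ht
  have hEa : 0 ≤ E a := by
    simp only [hE]
    have := hkin
    nlinarith
  have hEt : 0 ≤ E t := hEa.trans (hEmono ⟨le_refl a, hab⟩ ht ht.1)
  -- now conclude
  have hFt := hF t ht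
  have hF't := hF' t ht
  have hΓt := hΓ t (mem_Ici.2 ht.1)
  have hsq : (Real.sqrt (2 / (p + 1)) * Real.sqrt (Γ t) * F t ^ ((p + 1) / 2)) ^ 2
      = 2 / (p + 1) * (Γ t * F t ^ (p + 1)) := by
    have e1 : Real.sqrt (2 / (p + 1)) ^ 2 = 2 / (p + 1) :=
      Real.sq_sqrt (by positivity)
    have e2 : Real.sqrt (Γ t) ^ 2 = Γ t := Real.sq_sqrt hΓt
    have e3 : (F t ^ ((p + 1) / 2)) ^ 2 = F t ^ (p + 1) := by
      rw [← Real.rpow_natCast (F t ^ ((p + 1) / 2)) 2, ← Real.rpow_mul hFt]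
      norm_num
    rw [mul_pow, mul_pow, e1, e2, e3, mul_assoc]
  have hL : 0 ≤ Real.sqrt (2 / (p + 1)) * Real.sqrt (Γ t) * F t ^ ((p + 1) / 2) := by
    positivity
  calc Real.sqrt (2 / (p + 1)) * Real.sqrt (Γ t) * F t ^ ((p + 1) / 2)
      = Real.sqrt ((Real.sqrt (2 / (p + 1)) * Real.sqrt (Γ t) * F t ^ ((p + 1) / 2)) ^ 2) :=
        (Real.sqrt_sq hL).symm
    _ ≤ Real.sqrt (F' t ^ 2) := by
        apply Real.sqrt_le_sqrt
        rw [hsq]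
        simp only [hE] at hEt
        linarith
    _ = F' t := Real.sqrt_sq hF't
end

section
/- Let $p>1$, $c_0>0$, and let $A,\gamma\in C^1([a,\infty))$ be nonnegative functions with $A(t)\to\infty$ as $t\to\infty$, and suppose $\frac{d}{dt}(\gamma(t)A(t)^{-p})\le 0$ on $[a,\infty)$ and there exist $\varepsilon>0$, $c>0$ with $\gamma(t)\ge c\,A(t)(\ln A(t))^{2+\varepsilon}$ for all $t$. If $F\in C^2([a,b))$ satisfies $F(t)\ge c_0 A(t)$, $F'(t)\ge0$, and $F''(t)\ge\gamma(t)A(t)^{-p}F(t)^p$ on $[a,b)$, then $b$ must be finite. -/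
open Real Set Filter

lemma core_ineq (p c₀ c ε κ : ℝ) (hp : 1 < p) (hc₀ : 0 < c₀) (hc : 0 < c) (hε : 0 < ε)
    (hκ1 : κ ≤ c * c₀ ^ (p-1) / 2 ^ ((2:ℝ)+ε)) (hκ2 : κ ≤ c)
    (x y : ℝ) (hx : exp 1 ≤ x) (hy : exp 1 ≤ y) (hxy : c₀ * x ≤ y)
    (hY : log y ^ (2+ε) ≤ y ^ ((p-1)/2)) :
    κ * log y ^ (2+ε) ≤ c * log x ^ (2+ε) * (y / x) ^ (p-1) := by
  have hx0 : (0:ℝ) < x := lt_of_lt_of_le (exp_pos 1) hx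
  have hy0 : (0:ℝ) < y := lt_of_lt_of_le (exp_pos 1) hy
  have hlx : (1:ℝ) ≤ log x := by
    have := log_le_log (exp_pos 1) hx; rwa [log_exp] at this
  have hly : (1:ℝ) ≤ log y := by
    have := log_le_log (exp_pos 1) hy; rwa [log_exp] at this
  have hlx0 : (0:ℝ) ≤ log x := le_trans zero_le_one hlx
  have hly0 : (0:ℝ) ≤ log y := le_trans zero_le_one hly
  have hq : (0:ℝ) ≤ 2 + ε := by linarith
  have hp1 : (0:ℝ) ≤ p - 1 := by linarith
  have hR0 : (0:ℝ) < y / x := div_pos hy0 hx0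
  have hLy0 : (0:ℝ) ≤ log y ^ (2+ε) := rpow_nonneg hly0 _
  have hLx0 : (0:ℝ) ≤ log x ^ (2+ε) := rpow_nonneg hlx0 _
  rcases le_total y (x * x) with hcase | hcase
  · -- y ≤ x²
    have h1 : log y ≤ 2 * log x := by
      have := log_le_log hy0 hcase
      rw [log_mul (ne_of_gt hx0) (ne_of_gt hx0)] at this; linarith
    have h2 : log y ^ (2+ε) ≤ 2 ^ ((2:ℝ)+ε) * log x ^ (2+ε) := by
      calc log y ^ (2+ε) ≤ (2 * log x) ^ (2+ε) := rpow_le_rpow hly0 h1 hq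
        _ = 2 ^ ((2:ℝ)+ε) * log x ^ (2+ε) := mul_rpow (by norm_num) hlx0
    have h3 : c₀ ^ (p-1) ≤ (y/x) ^ (p-1) :=
      rpow_le_rpow (le_of_lt hc₀) ((le_div_iff₀ hx0).2 hxy) hp1
    have h4 : (0:ℝ) < 2 ^ ((2:ℝ)+ε) := rpow_pos_of_pos (by norm_num) _
    have h5 : (0:ℝ) < c₀ ^ (p-1) := rpow_pos_of_pos hc₀ _
    have key : κ * log y ^ (2+ε) ≤ (c * c₀ ^ (p-1) / 2 ^ ((2:ℝ)+ε)) * log y ^ (2+ε) :=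
      mul_le_mul_of_nonneg_right hκ1 hLy0
    calc κ * log y ^ (2+ε)
        ≤ (c * c₀ ^ (p-1) / 2 ^ ((2:ℝ)+ε)) * (2 ^ ((2:ℝ)+ε) * log x ^ (2+ε)) := by
          refine le_trans key (mul_le_mul_of_nonneg_left h2 ?_)
          positivity
      _ = c * log x ^ (2+ε) * c₀ ^ (p-1) := by field_simp
      _ ≤ c * log x ^ (2+ε) * (y/x) ^ (p-1) := by
          refine mul_le_mul_of_nonneg_left h3 ?_; positivity
  · -- x² ≤ y
    have hxs : x ≤ Real.sqrt y := (le_sqrt (le_of_lt hx0) (le_of_lt hy0)).2 (by nlinarith)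
    have hsy0 : (0:ℝ) < Real.sqrt y := Real.sqrt_pos.2 hy0
    have h1 : Real.sqrt y ≤ y / x := by
      rw [le_div_iff₀ hx0]
      calc Real.sqrt y * x ≤ Real.sqrt y * Real.sqrt y :=
            mul_le_mul_of_nonneg_left hxs (le_of_lt hsy0)
        _ = y := Real.mul_self_sqrt (le_of_lt hy0)
    have h2 : y ^ ((p-1)/2) ≤ (y/x) ^ (p-1) := by
      have := rpow_le_rpow (le_of_lt hsy0) h1 hp1
      rwa [Real.sqrt_eq_rpow, ← Real.rpow_mul (le_of_lt hy0), show 1/2*(p-1) = (p-1)/2 by ring]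
        at this
    have h3 : (1:ℝ) ≤ log x ^ (2+ε) := one_le_rpow hlx hq
    have h4 : log y ^ (2+ε) ≤ (y/x) ^ (p-1) := le_trans hY h2
    calc κ * log y ^ (2+ε) ≤ c * log y ^ (2+ε) := mul_le_mul_of_nonneg_right hκ2 hLy0
      _ ≤ c * (y/x) ^ (p-1) := mul_le_mul_of_nonneg_left h4 (le_of_lt hc)
      _ = c * 1 * (y/x) ^ (p-1) := by ring
      _ ≤ c * log x ^ (2+ε) * (y/x) ^ (p-1) := by
          refine mul_le_mul_of_nonneg_right (mul_le_mul_of_nonneg_left h3 (le_of_lt hc)) ?_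
          exact rpow_nonneg (le_of_lt hR0) _

lemma mvt_ge (h h' : ℝ → ℝ) (s t m : ℝ) (hst : s ≤ t)
    (hd : ∀ x ∈ Icc s t, HasDerivAt h (h' x) x)
    (hm : ∀ x ∈ Icc s t, m ≤ h' x) :
    m * (t - s) ≤ h t - h s := by
  have hcont : ContinuousOn h (Icc s t) := fun x hx =>
    ((hd x hx).continuousAt).continuousWithinAt
  have hdiff : DifferentiableOn ℝ h (interior (Icc s t)) := fun x hx =>
    ((hd x (interior_subset hx)).differentiableAt).differentiableWithinAt
  refine (convex_Icc s t).mul_sub_le_image_sub_of_le_deriv hcont hdiff ?_ s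
    (left_mem_Icc.2 hst) t (right_mem_Icc.2 hst) hst
  intro x hx
  rw [(hd x (interior_subset hx)).deriv]
  exact hm x (interior_subset hx)


/-- Second generalized Kato lemma (Lemma 3.2): for `F ≥ c₀ A`, `F' ≥ 0`,
`F'' ≥ γ A^{-p} F^p` with `A → ∞`, `γ A^{-p}` nonincreasing and
`γ ≥ c A (ln A)^{2+ε}`, there is no global solution on `[a, ∞)`. -/
theorem stmt_3 (p c₀ a : ℝ) (hp : 1 < p) (hc₀ : 0 < c₀)
    (A A' γ γ' g' : ℝ → ℝ)
    (hA : ∀ t ∈ Ici a, HasDerivAt A (A' t) t)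
    (hγ : ∀ t ∈ Ici a, HasDerivAt γ (γ' t) t)
    (hAnn : ∀ t ∈ Ici a, 0 ≤ A t)
    (hγnn : ∀ t ∈ Ici a, 0 ≤ γ t)
    (hAinf : Tendsto A atTop atTop)
    (hg : ∀ t ∈ Ici a, HasDerivAt (fun s => γ s * A s ^ (-p)) (g' t) t)
    (hg' : ∀ t ∈ Ici a, g' t ≤ 0)
    (ε c : ℝ) (hε : 0 < ε) (hc : 0 < c)
    (hγlow : ∀ t ∈ Ici a, c * A t * Real.log (A t) ^ (2 + ε) ≤ γ t)
    (F F' F'' : ℝ → ℝ)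
    (hd1 : ∀ t ∈ Ici a, HasDerivAt F (F' t) t)
    (hd2 : ∀ t ∈ Ici a, HasDerivAt F' (F'' t) t)
    (hF : ∀ t ∈ Ici a, c₀ * A t ≤ F t)
    (hF' : ∀ t ∈ Ici a, 0 ≤ F' t)
    (hF'' : ∀ t ∈ Ici a, γ t * A t ^ (-p) * F t ^ p ≤ F'' t) :
    False := by
  have hp1 : (0:ℝ) < p - 1 := by linarith
  have hq0 : (0:ℝ) ≤ 2 + ε := by linarith
  have hpp1 : (0:ℝ) < p + 1 := by linarith
  set κ : ℝ := min (c * c₀ ^ (p-1) / 2 ^ ((2:ℝ)+ε)) c with hκdef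
  have hκpos : 0 < κ := by
    refine lt_min ?_ hc
    have := Real.rpow_pos_of_pos hc₀ (p-1)
    have := Real.rpow_pos_of_pos (show (0:ℝ) < 2 by norm_num) ((2:ℝ)+ε)
    positivity
  set δ : ℝ := Real.sqrt (κ / (p+1)) with hδdef
  have hδpos : 0 < δ := Real.sqrt_pos.2 (by positivity)
  have hδsq : δ^2 = κ/(p+1) := Real.sq_sqrt (by positivity)
  -- F tends to atTop
  have hFinf : Tendsto F atTop atTop := by
    apply tendsto_atTop_mono' atTop ?_ (hAinf.const_mul_atTop hc₀)
    filter_upwards [eventually_ge_atTop a] with t ht using hF t ht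
  -- eventual polynomial domination of the log power
  have hYev : ∀ᶠ t in atTop, Real.log (F t) ^ (2+ε) ≤ F t ^ ((p-1)/2) := by
    have h2 : ∀ᶠ (y:ℝ) in atTop, Real.log y ^ (2+ε) ≤ y ^ ((p-1)/2) := by
      have h := (isLittleO_log_rpow_rpow_atTop (2+ε)
        (show (0:ℝ) < (p-1)/2 by linarith)).bound one_pos
      filter_upwards [h, eventually_ge_atTop (1:ℝ)] with y hy hy1
      rw [Real.norm_eq_abs, Real.norm_eq_abs, one_mul] at hy
      calc Real.log y ^ (2+ε) ≤ |Real.log y ^ (2+ε)| := le_abs_self _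
        _ ≤ |y ^ ((p-1)/2)| := hy
        _ = y ^ ((p-1)/2) := abs_of_nonneg (Real.rpow_nonneg (by linarith) _)
    exact hFinf.eventually (p := fun y => Real.log y ^ (2+ε) ≤ y ^ ((p-1)/2)) h2
  -- choose T
  obtain ⟨T, hT⟩ : ∃ T, ∀ t, T ≤ t → a ≤ t ∧ Real.exp 1 ≤ A t ∧ Real.exp 1 ≤ F t ∧
      2 ^ ((p+1)⁻¹) * F a ≤ F t ∧ Real.log (F t) ^ (2+ε) ≤ F t ^ ((p-1)/2) := by
    have e1 := eventually_ge_atTop a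
    have e2 := hAinf.eventually_ge_atTop (Real.exp 1)
    have e3 := hFinf.eventually_ge_atTop (Real.exp 1)
    have e4 := hFinf.eventually_ge_atTop (2 ^ ((p+1)⁻¹) * F a)
    have : ∀ᶠ t in atTop, a ≤ t ∧ Real.exp 1 ≤ A t ∧ Real.exp 1 ≤ F t ∧
        2 ^ ((p+1)⁻¹) * F a ≤ F t ∧ Real.log (F t) ^ (2+ε) ≤ F t ^ ((p-1)/2) := by
      filter_upwards [e1, e2, e3, e4, hYev] with t h1 h2 h3 h4 h5 using ⟨h1, h2, h3, h4, h5⟩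
    obtain ⟨T, hT⟩ := eventually_atTop.1 this
    exact ⟨T, hT⟩
  have hTa : a ≤ T := (hT T le_rfl).1
  -- F is nonneg and monotone on [a, ∞)
  have hFnn : ∀ t, a ≤ t → 0 ≤ F t := fun t ht =>
    le_trans (mul_nonneg hc₀.le (hAnn t ht)) (hF t ht)
  have hmono : ∀ s t, a ≤ s → s ≤ t → F s ≤ F t := by
    intro s t hs hst
    have h := mvt_ge F F' s t 0 hst
      (fun x hx => hd1 x (le_trans hs hx.1))
      (fun x hx => hF' x (le_trans hs hx.1))
    linarith
  -- Energy estimate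
  have key1 : ∀ t, a ≤ t →
      2/(p+1) * ((γ t * A t ^ (-p)) * (F t ^ (p+1) - F a ^ (p+1))) ≤ F' t * F' t := by
    intro t ht
    set Es : ℝ → ℝ := fun τ =>
      F' τ * F' τ - 2/(p+1) * ((γ τ * A τ ^ (-p)) * (F τ ^ (p+1) - F a ^ (p+1))) with hEsdef
    set Es' : ℝ → ℝ := fun τ =>
      (F'' τ * F' τ + F' τ * F'' τ) - 2/(p+1) * (g' τ * (F τ ^ (p+1) - F a ^ (p+1)) +
        (γ τ * A τ ^ (-p)) * ((p+1) * F τ ^ (p+1-1) * F' τ)) with hEs'def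
    have hder : ∀ τ ∈ Icc a t, HasDerivAt Es (Es' τ) τ := by
      intro τ hτ
      have hτa : τ ∈ Ici a := hτ.1
      have hpow : HasDerivAt (fun τ => F τ ^ (p+1)) ((p+1) * F τ ^ (p+1-1) * F' τ) τ := by
        have h := (Real.hasDerivAt_rpow_const (x := F τ) (p := p+1)
          (Or.inr (by linarith))).comp τ (hd1 τ hτa)
        simpa [Function.comp_def, mul_assoc] using h
      exact ((hd2 τ hτa).mul (hd2 τ hτa)).sub
        (((hg τ hτa).mul (hpow.sub_const (F a ^ (p+1)))).const_mul (2/(p+1)))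
    have hnn : ∀ τ ∈ Icc a t, (0:ℝ) ≤ Es' τ := by
      intro τ hτ
      have hτa : τ ∈ Ici a := hτ.1
      have hA0 : (0:ℝ) ≤ A τ ^ (-p) := Real.rpow_nonneg (hAnn τ hτa) _
      have hg0 : (0:ℝ) ≤ γ τ * A τ ^ (-p) := mul_nonneg (hγnn τ hτa) hA0
      have h'' := hF'' τ hτa
      have hF'0 := hF' τ hτa
      have hg'0 := hg' τ hτa
      have hFm : F a ^ (p+1) ≤ F τ ^ (p+1) :=
        Real.rpow_le_rpow (hFnn a le_rfl) (hmono a τ le_rfl hτ.1) (by linarith)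
      have hFp0 : (0:ℝ) ≤ F τ ^ p := Real.rpow_nonneg (hFnn τ hτa) _
      have e1 : (2:ℝ)/(p+1) * ((γ τ * A τ ^ (-p)) * ((p+1) * F τ ^ (p+1-1) * F' τ))
          = 2 * ((γ τ * A τ ^ (-p)) * F τ ^ (p+1-1) * F' τ) := by
        field_simp
      simp only [hEs'def]
      rw [show p+1-1 = p by ring] at e1 ⊢
      rw [mul_add, e1]
      have t1 : 2 * ((γ τ * A τ ^ (-p)) * F τ ^ p * F' τ) ≤ F'' τ * F' τ + F' τ * F'' τ := by
        nlinarith [mul_le_mul_of_nonneg_right h'' hF'0]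
      have t2 : 2/(p+1) * (g' τ * (F τ ^ (p+1) - F a ^ (p+1))) ≤ 0 := by
        have hX : g' τ * (F τ ^ (p+1) - F a ^ (p+1)) ≤ 0 :=
          mul_nonpos_iff.2 (Or.inr ⟨hg'0, by linarith⟩)
        exact mul_nonpos_iff.2 (Or.inl ⟨by positivity, hX⟩)
      linarith
    have h0 := mvt_ge Es Es' a t 0 ht hder hnn
    have hEsa : Es a = F' a * F' a := by simp [hEsdef]
    have hF'a := hF' a self_mem_Ici
    simp only [hEsdef] at h0 hEsa ⊢
    nlinarith [h0, mul_nonneg hF'a hF'a]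
  -- pointwise differential inequality beyond T
  have keyτ : ∀ τ, T ≤ τ →
      δ * Real.log (F τ) ^ (1+ε/2) * F τ ≤ F' τ := by
    intro τ hτ
    obtain ⟨hτa, hAe, hFe, hF2, hYτ⟩ := hT τ hτ
    have hτa' : τ ∈ Ici a := hτa
    have hA0 : (0:ℝ) < A τ := lt_of_lt_of_le (Real.exp_pos 1) hAe
    have hF0 : (0:ℝ) < F τ := lt_of_lt_of_le (Real.exp_pos 1) hFe
    have hL1 : (1:ℝ) ≤ Real.log (F τ) := by
      have := Real.log_le_log (Real.exp_pos 1) hFe; rwa [Real.log_exp] at this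
    have hL0 : (0:ℝ) < Real.log (F τ) := lt_of_lt_of_le one_pos hL1
    have hg0 : (0:ℝ) ≤ γ τ * A τ ^ (-p) :=
      mul_nonneg (hγnn τ hτa') (Real.rpow_nonneg (hAnn τ hτa') _)
    have h1 := key1 τ hτa
    have h2 : 2 * F a ^ (p+1) ≤ F τ ^ (p+1) := by
      have h := Real.rpow_le_rpow
        (mul_nonneg (Real.rpow_nonneg (by norm_num) _) (hFnn a le_rfl)) hF2 hpp1.le
      rwa [Real.mul_rpow (Real.rpow_nonneg (by norm_num) _) (hFnn a le_rfl),
        Real.rpow_inv_rpow (by norm_num) (ne_of_gt hpp1)] at h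
    -- core bound
    have h3 : κ * Real.log (F τ) ^ (2+ε) ≤ (γ τ * A τ ^ (-p)) * F τ ^ (p-1) := by
      have hco := core_ineq p c₀ c ε κ hp hc₀ hc hε (min_le_left _ _) (min_le_right _ _)
        (A τ) (F τ) hAe hFe (hF τ hτa') hYτ
      have heq : c * Real.log (A τ) ^ (2+ε) * (F τ / A τ) ^ (p-1)
          = (c * A τ * Real.log (A τ) ^ (2+ε)) * (A τ ^ (-p) * F τ ^ (p-1)) := by
        rw [Real.div_rpow (hFnn τ hτa') hA0.le, div_eq_mul_inv,
          ← Real.rpow_neg hA0.le, show -(p-1) = 1 + -p by ring,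
          Real.rpow_add hA0, Real.rpow_one]
        ring
      rw [heq] at hco
      have hnn2 : (0:ℝ) ≤ A τ ^ (-p) * F τ ^ (p-1) :=
        mul_nonneg (Real.rpow_nonneg hA0.le _) (Real.rpow_nonneg hF0.le _)
      calc κ * Real.log (F τ) ^ (2+ε)
          ≤ (c * A τ * Real.log (A τ) ^ (2+ε)) * (A τ ^ (-p) * F τ ^ (p-1)) := hco
        _ ≤ γ τ * (A τ ^ (-p) * F τ ^ (p-1)) :=
            mul_le_mul_of_nonneg_right (hγlow τ hτa') hnn2
        _ = (γ τ * A τ ^ (-p)) * F τ ^ (p-1) := by ring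
    -- combine into squared inequality
    have h5 : 1/(p+1) * ((γ τ * A τ ^ (-p)) * F τ ^ (p+1)) ≤ F' τ * F' τ := by
      have hΔ : F τ ^ (p+1) / 2 ≤ F τ ^ (p+1) - F a ^ (p+1) := by linarith
      have h6 := mul_le_mul_of_nonneg_left hΔ hg0
      have h7 := mul_le_mul_of_nonneg_left h6 (by positivity : (0:ℝ) ≤ 2/(p+1))
      have : 2/(p+1) * ((γ τ * A τ ^ (-p)) * (F τ ^ (p+1) / 2))
          = 1/(p+1) * ((γ τ * A τ ^ (-p)) * F τ ^ (p+1)) := by ring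
      linarith
    have h6 : F τ ^ (p+1) = F τ ^ (p-1) * (F τ)^2 := by
      rw [← Real.rpow_natCast (F τ) 2, ← Real.rpow_add hF0]
      congr 1; push_cast; ring
    have h7 : Real.log (F τ) ^ (2+ε) = (Real.log (F τ) ^ (1+ε/2))^2 := by
      rw [← Real.rpow_natCast (Real.log (F τ) ^ (1+ε/2)) 2, ← Real.rpow_mul hL0.le]
      congr 1; push_cast; ring
    have h8 : κ * Real.log (F τ) ^ (2+ε) * (F τ)^2 ≤ (γ τ * A τ ^ (-p)) * F τ ^ (p+1) := by
      rw [h6]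
      have := mul_le_mul_of_nonneg_right h3 (sq_nonneg (F τ))
      calc κ * Real.log (F τ) ^ (2+ε) * (F τ)^2
          ≤ (γ τ * A τ ^ (-p)) * F τ ^ (p-1) * (F τ)^2 := this
        _ = γ τ * A τ ^ (-p) * (F τ ^ (p-1) * (F τ)^2) := by ring
    have h4 : (δ * Real.log (F τ) ^ (1+ε/2) * F τ)^2 ≤ (F' τ)^2 := by
      have c1 : (δ * Real.log (F τ) ^ (1+ε/2) * F τ)^2
          = 1/(p+1) * (κ * Real.log (F τ) ^ (2+ε) * (F τ)^2) := by
        rw [h7]; rw [show (δ * Real.log (F τ) ^ (1+ε/2) * F τ)^2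
          = δ^2 * ((Real.log (F τ) ^ (1+ε/2))^2 * (F τ)^2) by ring, hδsq]
        ring
      rw [c1]
      have := mul_le_mul_of_nonneg_left h8 (by positivity : (0:ℝ) ≤ 1/(p+1))
      calc 1/(p+1) * (κ * Real.log (F τ) ^ (2+ε) * (F τ)^2)
          ≤ 1/(p+1) * ((γ τ * A τ ^ (-p)) * F τ ^ (p+1)) := this
        _ ≤ F' τ * F' τ := h5
        _ = (F' τ)^2 := (sq (F' τ)).symm
    have hlhs0 : (0:ℝ) ≤ δ * Real.log (F τ) ^ (1+ε/2) * F τ := by positivity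
    calc δ * Real.log (F τ) ^ (1+ε/2) * F τ
        = Real.sqrt ((δ * Real.log (F τ) ^ (1+ε/2) * F τ)^2) := (Real.sqrt_sq hlhs0).symm
      _ ≤ Real.sqrt ((F' τ)^2) := Real.sqrt_le_sqrt h4
      _ = F' τ := Real.sqrt_sq (hF' τ hτa')
  -- final contradiction via v = (log F)^{-ε/2}
  set B : ℝ := Real.log (F T) ^ (-(ε/2)) with hBdef
  have hB0 : (0:ℝ) ≤ B := by
    have hFe := (hT T le_rfl).2.2.1
    have hL1 : (0:ℝ) ≤ Real.log (F T) := by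
      have := Real.log_le_log (Real.exp_pos 1) hFe; rw [Real.log_exp] at this; linarith
    exact Real.rpow_nonneg hL1 _
  set t : ℝ := T + B/(ε/2*δ) + 1 with htdef
  have hTt : T ≤ t := by
    have : (0:ℝ) ≤ B/(ε/2*δ) := by positivity
    simp only [htdef]; linarith
  set v : ℝ → ℝ := fun τ => Real.log (F τ) ^ (-(ε/2)) with hvdef
  set v' : ℝ → ℝ := fun τ =>
    -(ε/2) * Real.log (F τ) ^ (-(ε/2)-1) * ((F τ)⁻¹ * F' τ) with hv'def
  have hfacts : ∀ τ ∈ Icc T t, (0:ℝ) < F τ ∧ (1:ℝ) ≤ Real.log (F τ) := by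
    intro τ hτ
    obtain ⟨hτa, hAe, hFe, _, _⟩ := hT τ hτ.1
    have hF0 : (0:ℝ) < F τ := lt_of_lt_of_le (Real.exp_pos 1) hFe
    have hL1 : (1:ℝ) ≤ Real.log (F τ) := by
      have := Real.log_le_log (Real.exp_pos 1) hFe; rwa [Real.log_exp] at this
    exact ⟨hF0, hL1⟩
  have hv : ∀ τ ∈ Icc T t, HasDerivAt v (v' τ) τ := by
    intro τ hτ
    obtain ⟨hF0, hL1⟩ := hfacts τ hτ
    have hτa : τ ∈ Ici a := le_trans hTa hτ.1
    have hlog : HasDerivAt (fun τ => Real.log (F τ)) ((F τ)⁻¹ * F' τ) τ :=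
      (Real.hasDerivAt_log (ne_of_gt hF0)).comp τ (hd1 τ hτa)
    have := (Real.hasDerivAt_rpow_const (x := Real.log (F τ)) (p := -(ε/2))
      (Or.inl (by linarith))).comp τ hlog
    simpa [Function.comp_def, hvdef, hv'def, mul_assoc] using this
  have hv' : ∀ τ ∈ Icc T t, ε/2*δ ≤ -(v' τ) := by
    intro τ hτ
    obtain ⟨hF0, hL1⟩ := hfacts τ hτ
    have hL0 : (0:ℝ) < Real.log (F τ) := lt_of_lt_of_le one_pos hL1
    have hk := keyτ τ hτ.1
    have hFi : (0:ℝ) < (F τ)⁻¹ := inv_pos.2 hF0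
    have h1 : δ * Real.log (F τ) ^ (1+ε/2) ≤ (F τ)⁻¹ * F' τ := by
      have := mul_le_mul_of_nonneg_left hk hFi.le
      rw [show (F τ)⁻¹ * (δ * Real.log (F τ) ^ (1+ε/2) * F τ)
        = δ * Real.log (F τ) ^ (1+ε/2) * ((F τ)⁻¹ * F τ) by ring,
        inv_mul_cancel₀ (ne_of_gt hF0), mul_one] at this
      exact this
    have hLpow : (0:ℝ) < Real.log (F τ) ^ (-(ε/2)-1) := Real.rpow_pos_of_pos hL0 _
    have h2 : ε/2 * δ ≤ ε/2 * Real.log (F τ) ^ (-(ε/2)-1) * ((F τ)⁻¹ * F' τ) := by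
      have h3 := mul_le_mul_of_nonneg_left h1
        (by positivity : (0:ℝ) ≤ ε/2 * Real.log (F τ) ^ (-(ε/2)-1))
      have h4 : ε/2 * Real.log (F τ) ^ (-(ε/2)-1) * (δ * Real.log (F τ) ^ (1+ε/2))
          = ε/2 * δ := by
        rw [show ε/2 * Real.log (F τ) ^ (-(ε/2)-1) * (δ * Real.log (F τ) ^ (1+ε/2))
          = ε/2 * δ * (Real.log (F τ) ^ (-(ε/2)-1) * Real.log (F τ) ^ (1+ε/2)) by ring,
          ← Real.rpow_add hL0, show -(ε/2)-1+(1+ε/2) = 0 by ring, Real.rpow_zero, mul_one]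
      rw [← h4]
      linarith [h3]
    simp only [hv'def]
    linarith [h2]
  have hmvt := mvt_ge (fun τ => -(v τ)) (fun τ => -(v' τ)) T t (ε/2*δ) hTt
    (fun τ hτ => (hv τ hτ).neg) hv'
  have hvt0 : (0:ℝ) ≤ v t := by
    obtain ⟨hF0, hL1⟩ := hfacts t (right_mem_Icc.2 hTt)
    exact Real.rpow_nonneg (by linarith) _
  have hvT : v T = B := rfl
  have htT : t - T = B/(ε/2*δ) + 1 := by simp only [htdef]; ring
  rw [htT] at hmvt
  have hεδ : (0:ℝ) < ε/2*δ := by positivity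
  have : ε/2*δ * (B/(ε/2*δ) + 1) = B + ε/2*δ := by field_simp
  rw [this] at hmvt
  -- hmvt : B + ε/2*δ ≤ -(v t) - -(v T) = v T - v t = B - v t
  simp only [hvT] at hmvt
  linarith
end

section
/- For $0\le b\le t$, the identity $t-b = \int_{-(e^{-b}-e^{-t})}^{e^{-b}-e^{-t}} \big((e^{-t}+e^{-b})^2-z^2\big)^{-1/2} F\Big(\tfrac12,\tfrac12;1;\frac{(e^{-b}-e^{-t})^2-z^2}{(e^{-b}+e^{-t})^2-z^2}\Big)\,dz$ holds, where $F$ is Gauss's hypergeometric function. -/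
open Real

/-- Gauss's hypergeometric function `F(a,b;c;z)` (real, defined by its series). -/
noncomputable def gaussHypergeometric (a b c z : ℝ) : ℝ :=
  ∑' n : ℕ, ((ascPochhammer ℝ n).eval a * (ascPochhammer ℝ n).eval b /
      ((ascPochhammer ℝ n).eval c * (n.factorial : ℝ))) * z ^ n


open MeasureTheory intervalIntegral Function



noncomputable def bsCoef (n : ℕ) : ℝ := (ascPochhammer ℝ n).eval (1/2) / n.factorial

lemma bsCoef_zero : bsCoef 0 = 1 := by simp [bsCoef]

lemma bsCoef_succ (n : ℕ) : bsCoef (n+1) = bsCoef n * ((n + 1/2) / (n + 1)) := by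
  have h1 : ((n+1).factorial : ℝ) = (n+1) * n.factorial := by
    rw [Nat.factorial_succ]; push_cast; ring
  have h2 : (n.factorial : ℝ) ≠ 0 := Nat.cast_ne_zero.2 (Nat.factorial_ne_zero n)
  have h3 : ((n:ℝ) + 1) ≠ 0 := by positivity
  rw [bsCoef, bsCoef, ascPochhammer_succ_eval, h1]
  field_simp
  ring

lemma bsCoef_pos (n : ℕ) : 0 < bsCoef n := by
  induction n with
  | zero => simp [bsCoef_zero]
  | succ k ih => rw [bsCoef_succ]; positivity

lemma bsCoef_le_one (n : ℕ) : bsCoef n ≤ 1 := by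
  induction n with
  | zero => simp [bsCoef_zero]
  | succ k ih =>
      rw [bsCoef_succ]
      have h1 : ((k:ℝ) + 1/2) / (k + 1) ≤ 1 := by
        rw [div_le_one (by positivity)]; linarith
      calc bsCoef k * (((k:ℝ) + 1/2) / (k + 1)) ≤ 1 * 1 :=
            mul_le_mul ih h1 (by positivity) (by norm_num)
        _ = 1 := by norm_num

lemma bsCoef_eq_prod (n : ℕ) :
    bsCoef n = ∏ i ∈ Finset.range n, (2 * (i:ℝ) + 1) / (2 * i + 2) := by
  induction n with
  | zero => simp [bsCoef_zero]
  | succ k ih =>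
      rw [Finset.prod_range_succ, ← ih, bsCoef_succ]
      congr 1
      rw [div_eq_div_iff (by positivity) (by positivity)]
      ring


noncomputable def bsSum (x : ℝ) : ℝ := ∑' n : ℕ, bsCoef n * x ^ n

lemma bsCoef_summable {x : ℝ} (hx : |x| < 1) : Summable (fun n => bsCoef n * x ^ n) := by
  apply Summable.of_norm_bounded (summable_geometric_of_lt_one (abs_nonneg x) hx)
  intro n
  rw [norm_mul, norm_pow, Real.norm_eq_abs, Real.norm_eq_abs,
    abs_of_pos (bsCoef_pos n)]
  exact mul_le_of_le_one_left (by positivity) (bsCoef_le_one n)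

lemma summable_aux {r : ℝ} (h0 : 0 ≤ r) (hr : r < 1) :
    Summable (fun n : ℕ => (n : ℝ) * r ^ (n - 1)) := by
  rw [← summable_nat_add_iff 1]
  have h1 : Summable (fun n : ℕ => (n : ℝ) ^ 1 * r ^ n) :=
    summable_pow_mul_geometric_of_norm_lt_one 1 (by rwa [Real.norm_eq_abs, abs_of_nonneg h0])
  have h2 : Summable (fun n : ℕ => r ^ n) := summable_geometric_of_lt_one h0 hr
  have := h1.add h2
  apply this.congr
  intro n
  simp only [pow_one]
  push_cast
  ring_nf

lemma bsDer_bound {r : ℝ} (hr : 0 ≤ r) {y : ℝ} (hy : |y| ≤ r) (n : ℕ) :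
    ‖bsCoef n * ((n : ℝ) * y ^ (n - 1))‖ ≤ (n : ℝ) * r ^ (n - 1) := by
  rw [norm_mul, norm_mul, norm_pow, Real.norm_eq_abs, Real.norm_eq_abs, Real.norm_eq_abs,
    abs_of_pos (bsCoef_pos n), Nat.abs_cast]
  calc bsCoef n * ((n:ℝ) * |y| ^ (n-1)) ≤ 1 * ((n:ℝ) * r ^ (n-1)) := by
        apply mul_le_mul (bsCoef_le_one n) _ (by positivity) (by norm_num)
        exact mul_le_mul_of_nonneg_left (pow_le_pow_left₀ (abs_nonneg y) hy _) (by positivity)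
    _ = (n:ℝ) * r ^ (n-1) := one_mul _

lemma bsSum_hasDerivAt {x : ℝ} (hx : |x| < 1) :
    HasDerivAt bsSum (∑' n : ℕ, bsCoef n * ((n : ℝ) * x ^ (n - 1))) x := by
  set r : ℝ := (|x| + 1) / 2 with hr
  have hr0 : 0 ≤ r := by positivity
  have hr1 : r < 1 := by rw [hr]; linarith
  have hxr : |x| < r := by rw [hr]; linarith
  apply hasDerivAt_tsum_of_isPreconnected (summable_aux hr0 hr1)
    (Metric.isOpen_ball (x := (0:ℝ)) (ε := r)) (convex_ball (0:ℝ) r).isPreconnected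
    (g := fun n y => bsCoef n * y ^ n)
    (g' := fun n y => bsCoef n * ((n : ℝ) * y ^ (n - 1)))
    (y₀ := x) ?_ ?_ ?_ ?_ ?_
  · intro n y _
    exact (hasDerivAt_pow n y).const_mul _
  · intro n y hy
    rw [Metric.mem_ball, dist_zero_right, Real.norm_eq_abs] at hy
    exact bsDer_bound hr0 hy.le n
  · rwa [Metric.mem_ball, dist_zero_right, Real.norm_eq_abs]
  · exact bsCoef_summable hx
  · rwa [Metric.mem_ball, dist_zero_right, Real.norm_eq_abs]


lemma bsDer_summable {x : ℝ} (hx : |x| < 1) :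
    Summable (fun n : ℕ => bsCoef n * ((n : ℝ) * x ^ (n - 1))) :=
  Summable.of_norm_bounded (summable_aux (abs_nonneg x) hx) (bsDer_bound (abs_nonneg x) le_rfl)

lemma bsU_summable {x : ℝ} (hx : |x| < 1) :
    Summable (fun n : ℕ => (n : ℝ) * bsCoef n * x ^ n) := by
  have := (bsDer_summable hx).mul_left x
  apply this.congr
  intro n
  cases n with
  | zero => simp
  | succ k => simp only [Nat.add_sub_cancel]; ring

lemma bs_ode {x : ℝ} (hx : |x| < 1) :
    2 * (1 - x) * (∑' n : ℕ, bsCoef n * ((n : ℝ) * x ^ (n - 1))) = bsSum x := by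
  set T := ∑' n : ℕ, bsCoef n * ((n : ℝ) * x ^ (n - 1)) with hT
  set U := ∑' n : ℕ, (n : ℝ) * bsCoef n * x ^ n with hU
  have hxT : x * T = U := by
    rw [hT, hU, ← tsum_mul_left]
    apply tsum_congr
    intro n
    cases n with
    | zero => simp
    | succ k => simp only [Nat.add_sub_cancel]; ring
  have hTU : T = U + (1/2) * bsSum x := by
    rw [hT, Summable.tsum_eq_zero_add (bsDer_summable hx)]
    simp only [Nat.cast_zero, zero_mul, mul_zero, zero_add, Nat.add_sub_cancel]
    have hterm : ∀ n : ℕ, bsCoef (n+1) * (((n:ℕ)+1 : ℝ) * x ^ n)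
        = (n : ℝ) * bsCoef n * x ^ n + (1/2) * (bsCoef n * x ^ n) := by
      intro n
      rw [bsCoef_succ]
      have : ((n:ℝ) + 1) ≠ 0 := by positivity
      field_simp
    rw [bsSum, ← tsum_mul_left,
      ← Summable.tsum_add (bsU_summable hx) ((bsCoef_summable hx).mul_left (1/2))]
    apply tsum_congr
    intro n
    have := hterm n
    push_cast at this ⊢
    linarith [this]
  have : 2 * (1 - x) * T = 2 * T - 2 * (x * T) := by ring
  rw [this, hxT, hTU]
  ring

lemma bsG_hasDerivAt {x : ℝ} (hx : |x| < 1) :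
    HasDerivAt (fun y => bsSum y ^ 2 * (1 - y)) 0 x := by
  have hS := bsSum_hasDerivAt hx
  set T := ∑' n : ℕ, bsCoef n * ((n : ℝ) * x ^ (n - 1)) with hT
  have h1 : HasDerivAt (fun y => bsSum y ^ 2) (2 * bsSum x ^ 1 * T) x := hS.pow 2
  have h2 : HasDerivAt (fun y : ℝ => 1 - y) (-1) x := by
    simpa using (hasDerivAt_id x).const_sub 1
  have hprod := h1.mul h2
  have hode := bs_ode hx
  rw [← hT] at hode
  have e : 2 * bsSum x ^ 1 * T * (1 - x) + bsSum x ^ 2 * -1 = 0 := by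
    have e2 : 2 * bsSum x ^ 1 * T * (1 - x) + bsSum x ^ 2 * -1
        = bsSum x * (2 * (1 - x) * T) - bsSum x ^ 2 := by ring
    rw [e2, hode]; ring
  rw [← e]
  exact hprod

lemma bsSum_zero : bsSum 0 = 1 := by
  rw [bsSum, tsum_eq_single 0 (fun n hn => by simp [zero_pow hn])]
  simp [bsCoef_zero]

lemma bsSum_sq {x : ℝ} (h0 : 0 ≤ x) (h1 : x < 1) : bsSum x ^ 2 * (1 - x) = 1 := by
  have key : ∀ y ∈ Set.Icc (0:ℝ) x, bsSum y ^ 2 * (1 - y) = bsSum 0 ^ 2 * (1 - 0) := by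
    apply constant_of_has_deriv_right_zero
    · intro y hy
      have hy1 : |y| < 1 := by
        rw [abs_of_nonneg hy.1]; exact lt_of_le_of_lt hy.2 h1
      exact (bsG_hasDerivAt hy1).continuousAt.continuousWithinAt
    · intro y hy
      have hy1 : |y| < 1 := by
        rw [abs_of_nonneg hy.1]; exact lt_of_lt_of_le hy.2 h1.le
      exact (bsG_hasDerivAt hy1).hasDerivWithinAt
  have := key x (Set.mem_Icc.2 ⟨h0, le_rfl⟩)
  rw [this, bsSum_zero]
  norm_num

lemma bsSum_pos {x : ℝ} (h0 : 0 ≤ x) (h1 : x < 1) : 0 < bsSum x := by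
  have hs := bsCoef_summable (x := x) (by rwa [abs_of_nonneg h0])
  have h01 : (1:ℝ) ≤ bsSum x := by
    have := Summable.le_tsum hs 0 (fun n _ => mul_nonneg (bsCoef_pos n).le (pow_nonneg h0 n))
    simp only [bsCoef_zero, pow_zero, mul_one] at this
    rw [bsSum]
    exact this
  linarith

lemma bs_hasSum {x : ℝ} (h0 : 0 ≤ x) (h1 : x < 1) :
    HasSum (fun n : ℕ => bsCoef n * x ^ n) ((1 - x) ^ (-(1/2) : ℝ)) := by
  have hs := bsCoef_summable (x := x) (by rwa [abs_of_nonneg h0])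
  have heq : bsSum x = (1 - x) ^ (-(1/2) : ℝ) := by
    have hx1 : (0:ℝ) < 1 - x := by linarith
    have hb : (0:ℝ) < (1 - x) ^ (-(1/2) : ℝ) := rpow_pos_of_pos hx1 _
    have hbsq : ((1 - x) ^ (-(1/2) : ℝ)) ^ 2 * (1 - x) = 1 := by
      rw [← Real.rpow_natCast ((1-x) ^ (-(1/2):ℝ)) 2, ← Real.rpow_mul hx1.le]
      norm_num
      rw [Real.rpow_neg_one]
      field_simp
    have hsq : bsSum x ^ 2 = ((1 - x) ^ (-(1/2) : ℝ)) ^ 2 := by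
      have h1' := bsSum_sq h0 h1
      have : bsSum x ^ 2 * (1-x) = ((1 - x) ^ (-(1/2) : ℝ)) ^ 2 * (1-x) := by
        rw [h1', hbsq]
      exact mul_right_cancel₀ (ne_of_gt hx1) this
    nlinarith [bsSum_pos h0 h1, hb]
  rw [← heq]
  exact hs.hasSum


lemma wallis (n : ℕ) : ∫ θ in (0:ℝ)..(π/2), sin θ ^ (2*n) = (π/2) * bsCoef n := by
  have hc : Continuous fun θ : ℝ => sin θ ^ (2*n) := by continuity
  have h1 : ∫ θ in (0:ℝ)..π, sin θ ^ (2*n) = π * bsCoef n := by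
    rw [integral_sin_pow_even, bsCoef_eq_prod]
  have h2 : ∫ θ in (π/2:ℝ)..π, sin θ ^ (2*n) = ∫ θ in (0:ℝ)..(π/2), sin θ ^ (2*n) := by
    have := intervalIntegral.integral_comp_sub_left (a := (0:ℝ)) (b := π/2)
      (fun x => sin x ^ (2*n)) π
    simp only [sin_pi_sub] at this
    rw [this]
    norm_num
    congr 1
    ring
  have h3 : (∫ θ in (0:ℝ)..(π/2), sin θ ^ (2*n)) + ∫ θ in (π/2:ℝ)..π, sin θ ^ (2*n)
      = ∫ θ in (0:ℝ)..π, sin θ ^ (2*n) :=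
    intervalIntegral.integral_add_adjacent_intervals
      (hc.intervalIntegrable _ _) (hc.intervalIntegrable _ _)
  rw [h2] at h3
  linarith [h1 ▸ h3]

lemma F_half_eq {m : ℝ} (h0 : 0 ≤ m) (h1 : m < 1) :
    gaussHypergeometric (1/2) (1/2) 1 m
      = (2/π) * ∫ θ in (0:ℝ)..(π/2), (1 - m * sin θ ^ 2) ^ (-(1/2) : ℝ) := by
  have hπ : (0:ℝ) < π := pi_pos
  -- coefficients
  have hcoef : gaussHypergeometric (1/2) (1/2) 1 m = ∑' n : ℕ, bsCoef n ^ 2 * m ^ n := by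
    unfold gaussHypergeometric
    apply tsum_congr
    intro n
    rw [ascPochhammer_eval_one]
    have hf : ((n.factorial : ℝ)) ≠ 0 := Nat.cast_ne_zero.2 (Nat.factorial_ne_zero n)
    rw [bsCoef]
    field_simp
  -- the family
  set F : ℕ → ℝ → ℝ := fun n θ => bsCoef n * (m * sin θ ^ 2) ^ n with hF
  have hFc : ∀ n, Continuous (F n) := by intro n; rw [hF]; continuity
  have hFnonneg : ∀ n θ, 0 ≤ F n θ := by
    intro n θ; exact mul_nonneg (bsCoef_pos n).le (pow_nonneg (by positivity) n)
  have hFint : ∀ n, ∫ θ in (0:ℝ)..(π/2), F n θ = (π/2) * (bsCoef n ^ 2 * m ^ n) := by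
    intro n
    have : ∀ θ : ℝ, F n θ = (bsCoef n * m ^ n) * sin θ ^ (2*n) := by
      intro θ; rw [hF]; simp only []
      rw [mul_pow, pow_mul]; ring
    simp_rw [this]
    rw [intervalIntegral.integral_const_mul, wallis]
    ring
  have hInt : ∀ n, IntegrableOn (F n) (Set.Ioc (0:ℝ) (π/2)) volume :=
    fun n => (hFc n).integrableOn_Ioc
  have hμ : ∀ n, ∫ θ in Set.Ioc (0:ℝ) (π/2), ‖F n θ‖ = (π/2) * (bsCoef n ^ 2 * m ^ n) := by
    intro n
    have : ∀ θ, ‖F n θ‖ = F n θ := fun θ => abs_of_nonneg (hFnonneg n θ)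
    simp_rw [this]
    rw [← intervalIntegral.integral_of_le (by positivity : (0:ℝ) ≤ π/2)]
    exact hFint n
  have hSumm : Summable fun n => ∫ θ in Set.Ioc (0:ℝ) (π/2), ‖F n θ‖ := by
    simp_rw [hμ]
    apply Summable.mul_left
    apply Summable.of_nonneg_of_le (fun n => by positivity)
      (fun n => ?_) (summable_geometric_of_lt_one h0 h1)
    calc bsCoef n ^ 2 * m ^ n ≤ 1 * m ^ n := by
          apply mul_le_mul_of_nonneg_right _ (pow_nonneg h0 n)
          calc bsCoef n ^ 2 ≤ 1^2 := pow_le_pow_left₀ (bsCoef_pos n).le (bsCoef_le_one n) 2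
            _ = 1 := one_pow 2
      _ = m ^ n := one_mul _
  have hswap := MeasureTheory.integral_tsum_of_summable_integral_norm
    (μ := volume.restrict (Set.Ioc (0:ℝ) (π/2))) (F := F)
    (fun n => (hInt n)) hSumm
  have hpt : ∀ θ : ℝ, (∑' n, F n θ) = (1 - m * sin θ ^ 2) ^ (-(1/2) : ℝ) := by
    intro θ
    have hx0 : 0 ≤ m * sin θ ^ 2 := by positivity
    have hx1 : m * sin θ ^ 2 < 1 := by
      calc m * sin θ ^ 2 ≤ m * 1 := by
            apply mul_le_mul_of_nonneg_left _ h0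
            rw [← Real.sin_sq_add_cos_sq θ]; nlinarith [sq_nonneg (cos θ)]
        _ = m := mul_one m
        _ < 1 := h1
    exact (bs_hasSum hx0 hx1).tsum_eq
  rw [hcoef]
  have hL : ∑' n : ℕ, bsCoef n ^ 2 * m ^ n
      = (2/π) * ∑' n : ℕ, ∫ θ in Set.Ioc (0:ℝ) (π/2), F n θ := by
    rw [← tsum_mul_left]
    apply tsum_congr
    intro n
    rw [← intervalIntegral.integral_of_le (by positivity : (0:ℝ) ≤ π/2), hFint n]
    field_simp
  rw [hL, hswap]
  congr 1
  rw [intervalIntegral.integral_of_le (by positivity : (0:ℝ) ≤ π/2)]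
  exact integral_congr_ae (Filter.Eventually.of_forall (fun θ => hpt θ))


lemma rpow_neg_half {E : ℝ} (h : 0 < E) : E ^ (-(1/2) : ℝ) = (Real.sqrt E)⁻¹ := by
  rw [Real.rpow_neg h.le, Real.sqrt_eq_rpow]

lemma inner_z {c A : ℝ} (hc : 0 < c) (hcA : c < A) {θ : ℝ} (hθ : 0 < Real.cos θ) :
    ∫ z in (-c)..c, (A^2 - c^2 * Real.sin θ^2 - z^2 * Real.cos θ^2) ^ (-(1/2) : ℝ)
      = (2 / Real.cos θ) * Real.arcsin (c * Real.cos θ / Real.sqrt (A^2 - c^2 * Real.sin θ^2)) := by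
  have hA : 0 < A := lt_trans hc hcA
  have hsin : Real.sin θ^2 ≤ 1 := by nlinarith [Real.sin_sq_add_cos_sq θ, sq_nonneg (Real.cos θ)]
  have hD2 : 0 < A^2 - c^2 * Real.sin θ^2 := by nlinarith
  set D := Real.sqrt (A^2 - c^2 * Real.sin θ^2) with hD
  have hDpos : 0 < D := Real.sqrt_pos.2 hD2
  have hDsq : D^2 = A^2 - c^2 * Real.sin θ^2 := Real.sq_sqrt hD2.le
  have hbase : ∀ z ∈ Set.uIcc (-c) c, 0 < A^2 - c^2 * Real.sin θ^2 - z^2 * Real.cos θ^2 := by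
    intro z hz
    rw [Set.uIcc_of_le (by linarith : -c ≤ c)] at hz
    have hz2 : z^2 ≤ c^2 := sq_le_sq' hz.1 hz.2
    have hcos : Real.cos θ^2 ≤ 1 := by
      nlinarith [Real.sin_sq_add_cos_sq θ, sq_nonneg (Real.sin θ)]
    have hzc : z^2 * Real.cos θ^2 ≤ c^2 * Real.cos θ^2 :=
      mul_le_mul_of_nonneg_right hz2 (sq_nonneg _)
    nlinarith [Real.sin_sq_add_cos_sq θ]
  have hfrac : ∀ z ∈ Set.uIcc (-c) c, (z * Real.cos θ / D)^2 < 1 := by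
    intro z hz
    have hb := hbase z hz
    rw [div_pow, mul_pow, div_lt_one (by positivity), hDsq]
    nlinarith
  have hderiv : ∀ z ∈ Set.uIcc (-c) c,
      HasDerivAt (fun z => (1 / Real.cos θ) * Real.arcsin (z * Real.cos θ / D))
        ((A^2 - c^2 * Real.sin θ^2 - z^2 * Real.cos θ^2) ^ (-(1/2) : ℝ)) z := by
    intro z hz
    have hf := hfrac z hz
    have hf0 : 0 < 1 - (z * Real.cos θ / D)^2 := by linarith
    have hne1 : z * Real.cos θ / D ≠ 1 := by
      intro h; rw [h] at hf; norm_num at hf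
    have hnem1 : z * Real.cos θ / D ≠ -1 := by
      intro h; rw [h] at hf; norm_num at hf
    have h1 : HasDerivAt (fun z : ℝ => z * Real.cos θ / D) (Real.cos θ / D) z := by
      simpa using ((hasDerivAt_id z).mul_const (Real.cos θ)).div_const D
    have h2 := (Real.hasDerivAt_arcsin hnem1 hne1).comp z h1
    have h3 := h2.const_mul (1 / Real.cos θ)
    refine h3.congr_deriv ?_
    symm
    rw [rpow_neg_half (hbase z hz)]
    have hsq' : A^2 - c^2 * Real.sin θ^2 - z^2 * Real.cos θ^2
        = D^2 * (1 - (z * Real.cos θ / D)^2) := by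
      rw [div_pow, mul_pow, hDsq]
      field_simp
    have hkey : Real.sqrt (A^2 - c^2 * Real.sin θ^2 - z^2 * Real.cos θ^2)
        = D * Real.sqrt (1 - (z * Real.cos θ / D)^2) := by
      rw [hsq', Real.sqrt_mul (sq_nonneg D), Real.sqrt_sq hDpos.le]
    rw [hkey]
    have hs0 : 0 < Real.sqrt (1 - (z * Real.cos θ / D)^2) := Real.sqrt_pos.2 hf0
    field_simp
  have hcont : ContinuousOn
      (fun z => (A^2 - c^2 * Real.sin θ^2 - z^2 * Real.cos θ^2) ^ (-(1/2) : ℝ))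
      (Set.uIcc (-c) c) := by
    intro z hz
    apply ContinuousAt.continuousWithinAt
    have hb : ContinuousAt (fun z : ℝ => A^2 - c^2 * Real.sin θ^2 - z^2 * Real.cos θ^2) z := by
      fun_prop
    exact hb.rpow_const (Or.inl (ne_of_gt (hbase z hz)))
  rw [intervalIntegral.integral_eq_sub_of_hasDerivAt hderiv
    (hcont.intervalIntegrable)]
  have hm : -c * Real.cos θ / D = -(c * Real.cos θ / D) := by ring
  rw [hm, Real.arcsin_neg]
  ring

lemma arcsin_to_arctan {c A : ℝ} (hc : 0 < c) (hcA : c < A) (θ : ℝ) :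
    Real.arcsin (c * Real.cos θ / Real.sqrt (A^2 - c^2 * Real.sin θ^2))
      = Real.arctan (c / Real.sqrt (A^2 - c^2) * Real.cos θ) := by
  have hA : 0 < A := lt_trans hc hcA
  have hB2 : 0 < A^2 - c^2 := by nlinarith
  set B := Real.sqrt (A^2 - c^2) with hB
  have hBpos : 0 < B := Real.sqrt_pos.2 hB2
  have hBsq : B^2 = A^2 - c^2 := Real.sq_sqrt hB2.le
  have hsin : Real.sin θ^2 ≤ 1 := by nlinarith [Real.sin_sq_add_cos_sq θ, sq_nonneg (Real.cos θ)]
  have hD2 : 0 < A^2 - c^2 * Real.sin θ^2 := by nlinarith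
  set D := Real.sqrt (A^2 - c^2 * Real.sin θ^2) with hD
  have hDpos : 0 < D := Real.sqrt_pos.2 hD2
  have hDsq : D^2 = A^2 - c^2 * Real.sin θ^2 := Real.sq_sqrt hD2.le
  rw [Real.arctan_eq_arcsin]
  congr 1
  have hpyth := Real.sin_sq_add_cos_sq θ
  have hc2 : c^2 * Real.sin θ^2 + c^2 * Real.cos θ^2 = c^2 := by nlinarith [hpyth]
  have h1 : 1 + (c / B * Real.cos θ)^2 = (D / B)^2 := by
    rw [mul_pow, div_pow, div_pow, hBsq, hDsq]
    field_simp
    nlinarith [hc2]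
  rw [h1, Real.sqrt_sq (by positivity : (0:ℝ) ≤ D / B)]
  field_simp


lemma arctan_div_integral (k : ℝ) {u : ℝ} (hu : u ≠ 0) :
    Real.arctan (k * u) / u = ∫ s in (0:ℝ)..k, 1 / (1 + s^2 * u^2) := by
  have hderiv : ∀ s ∈ Set.uIcc (0:ℝ) k,
      HasDerivAt (fun s => Real.arctan (s * u) / u) (1 / (1 + s^2 * u^2)) s := by
    intro s _
    have h1 : HasDerivAt (fun s : ℝ => s * u) u s := by
      simpa using (hasDerivAt_id s).mul_const u
    have h2 := (Real.hasDerivAt_arctan (s * u)).comp s h1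
    have h3 := h2.div_const u
    refine h3.congr_deriv ?_
    symm
    rw [mul_pow]
    field_simp
  have hcont : Continuous fun s : ℝ => 1 / (1 + s^2 * u^2) := by
    apply Continuous.div continuous_const (by continuity)
    intro s
    positivity
  rw [intervalIntegral.integral_eq_sub_of_hasDerivAt hderiv (hcont.intervalIntegrable _ _)]
  simp

lemma integral_theta (s : ℝ) :
    ∫ θ in (0:ℝ)..(π/2), 1 / (1 + s^2 * Real.cos θ^2) = (π/2) / Real.sqrt (1 + s^2) := by
  have hr2 : (0:ℝ) < 1 + s^2 := by positivity
  set r := Real.sqrt (1 + s^2) with hrdef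
  have hr : 0 < r := Real.sqrt_pos.2 hr2
  have hrsq : r^2 = 1 + s^2 := Real.sq_sqrt hr2.le
  have hπ : (0:ℝ) < π := pi_pos
  have hcos_pos : ∀ θ ∈ Set.uIcc (0:ℝ) (π/4), 0 < Real.cos θ := by
    intro θ hθ
    rw [Set.uIcc_of_le (by linarith : (0:ℝ) ≤ π/4)] at hθ
    apply Real.cos_pos_of_mem_Ioo
    constructor <;> [linarith [hθ.1]; linarith [hθ.2]]
  -- piece 1
  have hd1 : ∀ θ ∈ Set.uIcc (0:ℝ) (π/4),
      HasDerivAt (fun θ => (1/r) * Real.arctan (Real.tan θ / r))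
        (1 / (1 + s^2 * Real.cos θ^2)) θ := by
    intro θ hθ
    have hcos := hcos_pos θ hθ
    have ht : HasDerivAt Real.tan (1 / Real.cos θ^2) θ := Real.hasDerivAt_tan (ne_of_gt hcos)
    have h1 : HasDerivAt (fun θ => Real.tan θ / r) ((1 / Real.cos θ^2) / r) θ := ht.div_const r
    have h2 := ((Real.hasDerivAt_arctan (Real.tan θ / r)).comp θ h1).const_mul (1/r)
    refine h2.congr_deriv ?_
    symm
    have hpyth := Real.sin_sq_add_cos_sq θ
    have hcne : Real.cos θ ≠ 0 := ne_of_gt hcos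
    have hrne : r ≠ 0 := ne_of_gt hr
    have hpos : (0:ℝ) < 1 + (Real.tan θ / r)^2 := by positivity
    have h4 : (1/r) * (1 / (1 + (Real.tan θ / r)^2) * (1 / Real.cos θ^2 / r))
        = 1 / ((r^2 + Real.tan θ^2) * Real.cos θ^2) := by
      field_simp
    have h5 : (r^2 + Real.tan θ^2) * Real.cos θ^2 = 1 + s^2 * Real.cos θ^2 := by
      rw [Real.tan_eq_sin_div_cos, div_pow, hrsq]
      field_simp
      linear_combination hpyth
    rw [h4, h5]
  have hc1 : Continuous fun θ : ℝ => 1 / (1 + s^2 * Real.cos θ^2) := by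
    apply Continuous.div continuous_const (by continuity)
    intro θ; positivity
  have hp1 : ∫ θ in (0:ℝ)..(π/4), 1 / (1 + s^2 * Real.cos θ^2)
      = (1/r) * Real.arctan (1/r) := by
    rw [intervalIntegral.integral_eq_sub_of_hasDerivAt hd1 (hc1.intervalIntegrable _ _)]
    simp [Real.tan_pi_div_four]
  -- piece 2
  have hd2 : ∀ θ ∈ Set.uIcc (0:ℝ) (π/4),
      HasDerivAt (fun θ => (1/r) * Real.arctan (r * Real.tan θ))
        (1 / (1 + s^2 * Real.sin θ^2)) θ := by
    intro θ hθ
    have hcos := hcos_pos θ hθ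
    have ht : HasDerivAt Real.tan (1 / Real.cos θ^2) θ := Real.hasDerivAt_tan (ne_of_gt hcos)
    have h1 : HasDerivAt (fun θ => r * Real.tan θ) (r * (1 / Real.cos θ^2)) θ := ht.const_mul r
    have h2 := ((Real.hasDerivAt_arctan (r * Real.tan θ)).comp θ h1).const_mul (1/r)
    refine h2.congr_deriv ?_
    symm
    have hpyth := Real.sin_sq_add_cos_sq θ
    have hcne : Real.cos θ ≠ 0 := ne_of_gt hcos
    have hrne : r ≠ 0 := ne_of_gt hr
    have hpos : (0:ℝ) < 1 + (r * Real.tan θ)^2 := by positivity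
    have h4 : (1/r) * (1 / (1 + (r * Real.tan θ)^2) * (r * (1 / Real.cos θ^2)))
        = 1 / ((1 + r^2 * Real.tan θ^2) * Real.cos θ^2) := by
      field_simp
    have h5 : (1 + r^2 * Real.tan θ^2) * Real.cos θ^2 = 1 + s^2 * Real.sin θ^2 := by
      rw [Real.tan_eq_sin_div_cos, div_pow, hrsq]
      field_simp
      linear_combination hpyth
    rw [h4, h5]
  have hc2 : Continuous fun θ : ℝ => 1 / (1 + s^2 * Real.sin θ^2) := by
    apply Continuous.div continuous_const (by continuity)
    intro θ; positivity
  have hp2' : ∫ θ in (0:ℝ)..(π/4), 1 / (1 + s^2 * Real.sin θ^2)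
      = (1/r) * Real.arctan r := by
    rw [intervalIntegral.integral_eq_sub_of_hasDerivAt hd2 (hc2.intervalIntegrable _ _)]
    simp [Real.tan_pi_div_four]
  have hp2 : ∫ θ in (π/4:ℝ)..(π/2), 1 / (1 + s^2 * Real.cos θ^2)
      = (1/r) * Real.arctan r := by
    have hsub := intervalIntegral.integral_comp_sub_left (a := (0:ℝ)) (b := π/4)
      (fun x => 1 / (1 + s^2 * Real.cos x^2)) (π/2)
    simp only [Real.cos_pi_div_two_sub] at hsub
    rw [show π/2 - (π/4) = π/4 by ring, show π/2 - (0:ℝ) = π/2 by ring] at hsub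
    rw [← hsub, hp2']
  have hadd : (∫ θ in (0:ℝ)..(π/4), 1 / (1 + s^2 * Real.cos θ^2))
      + ∫ θ in (π/4:ℝ)..(π/2), 1 / (1 + s^2 * Real.cos θ^2)
      = ∫ θ in (0:ℝ)..(π/2), 1 / (1 + s^2 * Real.cos θ^2) :=
    intervalIntegral.integral_add_adjacent_intervals
      (hc1.intervalIntegrable _ _) (hc1.intervalIntegrable _ _)
  rw [← hadd, hp1, hp2, one_div r, Real.arctan_inv_of_pos hr]
  ring

lemma integral_s (k : ℝ) :
    ∫ s in (0:ℝ)..k, (π/2) / Real.sqrt (1 + s^2) = (π/2) * Real.arsinh k := by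
  have hderiv : ∀ s ∈ Set.uIcc (0:ℝ) k,
      HasDerivAt (fun s => (π/2) * Real.arsinh s) ((π/2) / Real.sqrt (1 + s^2)) s := by
    intro s _
    have h := (Real.hasDerivAt_arsinh s).const_mul (π/2)
    refine h.congr_deriv ?_
    exact (div_eq_mul_inv _ _).symm
  have hcont : Continuous fun s : ℝ => (π/2) / Real.sqrt (1 + s^2) := by
    apply Continuous.div continuous_const (by continuity)
    intro s
    exact ne_of_gt (Real.sqrt_pos.2 (by positivity))
  rw [intervalIntegral.integral_eq_sub_of_hasDerivAt hderiv (hcont.intervalIntegrable _ _)]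
  simp [Real.arsinh_zero]


lemma main_integral {c A : ℝ} (hc : 0 < c) (hcA : c < A) :
    (∫ z in (-c)..c, (A^2 - z^2) ^ (-(1/2) : ℝ) *
        gaussHypergeometric (1/2) (1/2) 1 ((c^2 - z^2) / (A^2 - z^2)))
      = 2 * Real.arsinh (c / Real.sqrt (A^2 - c^2)) := by
  have hA : 0 < A := lt_trans hc hcA
  have hπ : (0:ℝ) < π := pi_pos
  have hcc : -c ≤ c := by linarith
  have hA2c2 : 0 < A^2 - c^2 := by nlinarith
  set k := c / Real.sqrt (A^2 - c^2) with hk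
  have hk0 : 0 < k := div_pos hc (Real.sqrt_pos.2 hA2c2)
  set G : ℝ → ℝ → ℝ :=
    fun z θ => (A^2 - c^2 * Real.sin θ^2 - z^2 * Real.cos θ^2) ^ (-(1/2) : ℝ) with hG
  -- positivity of the base on the relevant strip
  have hbase : ∀ z θ : ℝ, z^2 ≤ c^2 → 0 < A^2 - c^2 * Real.sin θ^2 - z^2 * Real.cos θ^2 := by
    intro z θ hz2
    have hpyth := Real.sin_sq_add_cos_sq θ
    have hzc : z^2 * Real.cos θ^2 ≤ c^2 * Real.cos θ^2 :=
      mul_le_mul_of_nonneg_right hz2 (sq_nonneg _)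
    nlinarith [sq_nonneg (Real.sin θ), sq_nonneg (Real.cos θ)]
  -- Step A: pointwise rewriting of the integrand
  have stepA : ∀ z ∈ Set.uIcc (-c) c,
      (A^2 - z^2) ^ (-(1/2) : ℝ) *
          gaussHypergeometric (1/2) (1/2) 1 ((c^2 - z^2) / (A^2 - z^2))
        = (2/π) * ∫ θ in (0:ℝ)..(π/2), G z θ := by
    intro z hz
    rw [Set.uIcc_of_le hcc] at hz
    have hz2 : z^2 ≤ c^2 := sq_le_sq' hz.1 hz.2
    have hAz : 0 < A^2 - z^2 := by nlinarith
    have hm0 : 0 ≤ (c^2 - z^2) / (A^2 - z^2) := div_nonneg (by linarith) hAz.le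
    have hm1 : (c^2 - z^2) / (A^2 - z^2) < 1 := by
      rw [div_lt_one hAz]; nlinarith
    rw [F_half_eq hm0 hm1]
    rw [show (A^2 - z^2) ^ (-(1/2) : ℝ) *
          ((2/π) * ∫ θ in (0:ℝ)..(π/2), (1 - (c^2-z^2)/(A^2-z^2) * Real.sin θ ^ 2) ^ (-(1/2):ℝ))
        = (2/π) * ((A^2 - z^2) ^ (-(1/2) : ℝ) *
          ∫ θ in (0:ℝ)..(π/2), (1 - (c^2-z^2)/(A^2-z^2) * Real.sin θ ^ 2) ^ (-(1/2):ℝ)) by ring]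
    rw [← intervalIntegral.integral_const_mul]
    congr 1
    apply intervalIntegral.integral_congr
    intro θ _
    simp only []
    have hpyth := Real.sin_sq_add_cos_sq θ
    have hsin2 : Real.sin θ^2 ≤ 1 := by nlinarith [sq_nonneg (Real.cos θ)]
    have hmm : 0 < 1 - (c^2-z^2)/(A^2-z^2) * Real.sin θ^2 := by
      have : (c^2-z^2)/(A^2-z^2) * Real.sin θ^2 ≤ (c^2-z^2)/(A^2-z^2) * 1 :=
        mul_le_mul_of_nonneg_left hsin2 hm0
      nlinarith
    rw [hG, ← Real.mul_rpow hAz.le hmm.le]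
    congr 1
    have e : (A^2-z^2) * ((c^2-z^2)/(A^2-z^2) * Real.sin θ^2) = (c^2-z^2) * Real.sin θ^2 := by
      field_simp
    rw [mul_sub, mul_one, e]
    linear_combination z^2 * hpyth
  -- Step B : rewrite the integral and apply Fubini
  have hGcont : ContinuousOn (uncurry G) (Set.Icc (-c) c ×ˢ Set.Icc (0:ℝ) (π/2)) := by
    intro p hp
    apply ContinuousAt.continuousWithinAt
    have hb : ContinuousAt
        (fun p : ℝ × ℝ => A^2 - c^2 * Real.sin p.2^2 - p.1^2 * Real.cos p.2^2) p := by
      fun_prop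
    have hz2 : p.1^2 ≤ c^2 := sq_le_sq' hp.1.1 hp.1.2
    exact hb.rpow_const (Or.inl (ne_of_gt (hbase p.1 p.2 hz2)))
  have hGint : Integrable (uncurry G)
      ((volume.restrict (Set.Ioc (-c) c)).prod (volume.restrict (Set.Ioc (0:ℝ) (π/2)))) := by
    rw [Measure.prod_restrict, ← Measure.volume_eq_prod]
    apply MeasureTheory.IntegrableOn.mono_set
      (hGcont.integrableOn_compact' (isCompact_Icc.prod isCompact_Icc)
        (measurableSet_Icc.prod measurableSet_Icc))
    exact Set.prod_mono Set.Ioc_subset_Icc_self Set.Ioc_subset_Icc_self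
  have fub1 :
      (∫ z in Set.Ioc (-c) c, ∫ θ in Set.Ioc (0:ℝ) (π/2), G z θ)
        = ∫ θ in Set.Ioc (0:ℝ) (π/2), ∫ z in Set.Ioc (-c) c, G z θ :=
    MeasureTheory.integral_integral_swap hGint
  -- Step C : inner z integral, a.e. in θ
  have hinner : ∀ θ ∈ Set.Ioc (0:ℝ) (π/2), θ ≠ π/2 →
      (∫ z in Set.Ioc (-c) c, G z θ) = 2 * ∫ s in (0:ℝ)..k, 1 / (1 + s^2 * Real.cos θ^2) := by
    intro θ hθ hne
    have hθ2 : θ < π/2 := lt_of_le_of_ne hθ.2 hne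
    have hcos : 0 < Real.cos θ := Real.cos_pos_of_mem_Ioo ⟨by linarith [hθ.1], hθ2⟩
    rw [← intervalIntegral.integral_of_le hcc]
    rw [inner_z hc hcA hcos, arcsin_to_arctan hc hcA θ]
    rw [← hk]
    rw [← arctan_div_integral k (ne_of_gt hcos)]
    field_simp
  -- a.e. version
  have hae : ∀ᵐ θ : ℝ, θ ≠ π / 2 := by
    refine MeasureTheory.ae_iff.mpr ?_
    have h0 : volume ({π/2} : Set ℝ) = 0 := measure_singleton _
    convert h0 using 2
    ext x
    simp
  have hpi2 : (0:ℝ) ≤ π/2 := by positivity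
  -- second Fubini data
  set f2 : ℝ → ℝ → ℝ := fun θ s => 1 / (1 + s^2 * Real.cos θ^2) with hf2
  have hf2cont : Continuous (uncurry f2) := by
    apply Continuous.div continuous_const
    · fun_prop
    · intro p
      have : (0:ℝ) < 1 + p.2^2 * Real.cos p.1^2 := by positivity
      exact ne_of_gt this
  have hf2int : Integrable (uncurry f2)
      ((volume.restrict (Set.Ioc (0:ℝ) (π/2))).prod (volume.restrict (Set.Ioc (0:ℝ) k))) := by
    rw [Measure.prod_restrict, ← Measure.volume_eq_prod]
    apply MeasureTheory.IntegrableOn.mono_set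
      (hf2cont.continuousOn.integrableOn_compact' (isCompact_Icc.prod isCompact_Icc)
        (measurableSet_Icc.prod measurableSet_Icc)
        (K := Set.Icc (0:ℝ) (π/2) ×ˢ Set.Icc (0:ℝ) k))
    exact Set.prod_mono Set.Ioc_subset_Icc_self Set.Ioc_subset_Icc_self
  have fub2 : (∫ θ in Set.Ioc (0:ℝ) (π/2), ∫ s in Set.Ioc (0:ℝ) k, f2 θ s)
      = ∫ s in Set.Ioc (0:ℝ) k, ∫ θ in Set.Ioc (0:ℝ) (π/2), f2 θ s :=
    MeasureTheory.integral_integral_swap hf2int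
  -- assemble
  calc (∫ z in (-c)..c, (A^2 - z^2) ^ (-(1/2) : ℝ) *
        gaussHypergeometric (1/2) (1/2) 1 ((c^2 - z^2) / (A^2 - z^2)))
      = ∫ z in (-c)..c, (2/π) * ∫ θ in (0:ℝ)..(π/2), G z θ :=
        intervalIntegral.integral_congr stepA
    _ = (2/π) * ∫ z in (-c)..c, ∫ θ in (0:ℝ)..(π/2), G z θ :=
        intervalIntegral.integral_const_mul _ _
    _ = (2/π) * ∫ z in Set.Ioc (-c) c, ∫ θ in Set.Ioc (0:ℝ) (π/2), G z θ := by
        rw [intervalIntegral.integral_of_le hcc]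
        congr 1
        apply MeasureTheory.setIntegral_congr_ae measurableSet_Ioc
        filter_upwards with z _
        rw [intervalIntegral.integral_of_le hpi2]
    _ = (2/π) * ∫ θ in Set.Ioc (0:ℝ) (π/2), ∫ z in Set.Ioc (-c) c, G z θ := by rw [fub1]
    _ = (2/π) * ∫ θ in Set.Ioc (0:ℝ) (π/2), 2 * ∫ s in (0:ℝ)..k, f2 θ s := by
        congr 1
        apply MeasureTheory.setIntegral_congr_ae measurableSet_Ioc
        filter_upwards [hae] with θ hθne hθmem
        exact hinner θ hθmem hθne
    _ = (2/π) * (2 * ∫ θ in Set.Ioc (0:ℝ) (π/2), ∫ s in (0:ℝ)..k, f2 θ s) := by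
        rw [MeasureTheory.integral_const_mul]
    _ = (2/π) * (2 * ∫ θ in Set.Ioc (0:ℝ) (π/2), ∫ s in Set.Ioc (0:ℝ) k, f2 θ s) := by
        congr 1
        congr 1
        apply MeasureTheory.setIntegral_congr_ae measurableSet_Ioc
        filter_upwards with θ _
        rw [intervalIntegral.integral_of_le hk0.le]
    _ = (2/π) * (2 * ∫ s in Set.Ioc (0:ℝ) k, ∫ θ in Set.Ioc (0:ℝ) (π/2), f2 θ s) := by rw [fub2]
    _ = (2/π) * (2 * ∫ s in Set.Ioc (0:ℝ) k, (π/2) / Real.sqrt (1 + s^2)) := by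
        congr 1
        congr 1
        apply MeasureTheory.setIntegral_congr_ae measurableSet_Ioc
        filter_upwards with s _
        rw [← intervalIntegral.integral_of_le hpi2]
        exact integral_theta s
    _ = (2/π) * (2 * ((π/2) * Real.arsinh k)) := by
        rw [← intervalIntegral.integral_of_le hk0.le, integral_s]
    _ = 2 * Real.arsinh k := by field_simp


/-- Corollary 2.2(i): integral representation of `t - b` via `F(1/2,1/2;1;·)`. -/
theorem stmt_9 (b t : ℝ) (hb : 0 ≤ b) (hbt : b ≤ t) :
    t - b
      = ∫ z in (-(Real.exp (-b) - Real.exp (-t)))..(Real.exp (-b) - Real.exp (-t)),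
          ((Real.exp (-t) + Real.exp (-b)) ^ 2 - z ^ 2) ^ (-(1 / 2 : ℝ)) *
          gaussHypergeometric (1 / 2) (1 / 2) 1
            (((Real.exp (-b) - Real.exp (-t)) ^ 2 - z ^ 2) /
             ((Real.exp (-b) + Real.exp (-t)) ^ 2 - z ^ 2)) := by
  rcases eq_or_lt_of_le hbt with heq | hlt
  · subst heq
    simp
  · set c := Real.exp (-b) - Real.exp (-t) with hcdef
    set A := Real.exp (-b) + Real.exp (-t) with hAdef
    have hc : 0 < c := by
      have := Real.exp_lt_exp.2 (neg_lt_neg hlt)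
      simp only [hcdef]
      linarith
    have hcA : c < A := by
      have := Real.exp_pos (-t)
      simp only [hcdef, hAdef]
      linarith
    have hmain := main_integral hc hcA
    have hcomm : ∀ z : ℝ, (Real.exp (-t) + Real.exp (-b))^2 - z^2 = A^2 - z^2 := by
      intro z; rw [hAdef]; ring
    rw [show (∫ z in (-c)..c,
          ((Real.exp (-t) + Real.exp (-b)) ^ 2 - z ^ 2) ^ (-(1 / 2 : ℝ)) *
          gaussHypergeometric (1 / 2) (1 / 2) 1
            ((c ^ 2 - z ^ 2) / (A ^ 2 - z ^ 2)))
        = ∫ z in (-c)..c, (A^2 - z^2) ^ (-(1/2) : ℝ) *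
            gaussHypergeometric (1/2) (1/2) 1 ((c^2 - z^2) / (A^2 - z^2)) by
      apply intervalIntegral.integral_congr
      intro z _
      simp only [hcomm]]
    rw [hmain]
    -- now show t - b = 2 * arsinh (c / sqrt (A^2 - c^2))
    have hE : A^2 - c^2 = (2 * Real.exp (-(b+t)/2))^2 := by
      have h1 : Real.exp (-(b+t)/2) ^ 2 = Real.exp (-b) * Real.exp (-t) := by
        rw [sq, ← Real.exp_add, ← Real.exp_add]
        congr 1
        ring
      rw [mul_pow, h1, hcdef, hAdef]
      ring
    have hsqrt : Real.sqrt (A^2 - c^2) = 2 * Real.exp (-(b+t)/2) := by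
      rw [hE, Real.sqrt_sq (by positivity)]
    have hk : c / Real.sqrt (A^2 - c^2) = Real.sinh ((t - b)/2) := by
      rw [hsqrt, Real.sinh_eq]
      rw [div_eq_div_iff (by positivity) two_ne_zero]
      have h1 : Real.exp ((t-b)/2) * Real.exp (-(b+t)/2) = Real.exp (-b) := by
        rw [← Real.exp_add]; congr 1; ring
      have h2 : Real.exp (-((t-b)/2)) * Real.exp (-(b+t)/2) = Real.exp (-t) := by
        rw [← Real.exp_add]; congr 1; ring
      rw [hcdef]
      linear_combination (-2)*h1 + 2*h2
    rw [hk, Real.arsinh_sinh]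
    ring
end

section
/- Let $q>1$, $F\in C^2([0,b))$ with $F(t)\ge C_0+C_1 t$ (where $C_0\ge0$, $C_1>0$) and $F''(t)\ge \delta_0\,t^{-1-q}F(t)^q$ for all large $t\in[0,b)$, where $\delta_0>0$. Then $b$ must be finite. -/
open Real Set

private lemma mono_aux {A : ℝ} {f g : ℝ → ℝ}
    (hf : ∀ t ∈ Ici A, HasDerivAt f (g t) t)
    (hg : ∀ t ∈ Ici A, 0 ≤ g t) : MonotoneOn f (Ici A) := by
  apply monotoneOn_of_deriv_nonneg (convex_Ici A)
  · exact fun t ht => (hf t ht).continuousAt.continuousWithinAt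
  · intro t ht
    exact ((hf t (interior_subset ht)).differentiableAt).differentiableWithinAt
  · intro t ht
    rw [(hf t (interior_subset ht)).deriv]
    exact hg t (interior_subset ht)

private lemma anti_aux {A : ℝ} {f g : ℝ → ℝ}
    (hf : ∀ t ∈ Ici A, HasDerivAt f (g t) t)
    (hg : ∀ t ∈ Ici A, g t ≤ 0) : AntitoneOn f (Ici A) := by
  apply antitoneOn_of_deriv_nonpos (convex_Ici A)
  · exact fun t ht => (hf t ht).continuousAt.continuousWithinAt
  · intro t ht
    exact ((hf t (interior_subset ht)).differentiableAt).differentiableWithinAt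
  · intro t ht
    rw [(hf t (interior_subset ht)).deriv]
    exact hg t (interior_subset ht)

set_option maxHeartbeats 2000000 in
/-- Kato's lemma (1980, Lemma 2): a `C²` function with `F(t) ≥ C₀ + C₁ t`
(`C₁ > 0`) and `F'' ≥ δ₀ t^{-1-q} F^q` (`q > 1`) for all large `t` cannot be
global. -/
theorem stmt_14 (q C₀ C₁ δ₀ : ℝ) (hq : 1 < q) (hC₀ : 0 ≤ C₀)
    (hC₁ : 0 < C₁) (hδ₀ : 0 < δ₀)
    (F F' F'' : ℝ → ℝ)
    (hd1 : ∀ t ∈ Ici (0 : ℝ), HasDerivAt F (F' t) t)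
    (hd2 : ∀ t ∈ Ici (0 : ℝ), HasDerivAt F' (F'' t) t)
    (hF : ∀ t ∈ Ici (0 : ℝ), C₀ + C₁ * t ≤ F t)
    (T : ℝ) (hT : 0 < T)
    (hF'' : ∀ t ∈ Ici T, δ₀ * t ^ (-1 - q) * F t ^ q ≤ F'' t) :
    False := by
  have hq0 : (0:ℝ) < q := lt_trans one_pos hq
  have hFge : ∀ t, 0 ≤ t → C₁ * t ≤ F t := by
    intro t ht
    have := hF t ht
    nlinarith
  have hFpos : ∀ t, 0 < t → 0 < F t := by
    intro t ht
    have := hFge t ht.le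
    nlinarith
  -- Step 1 : F'' ≥ β / t on [T, ∞)
  set β := δ₀ * C₁ ^ q with hβdef
  have hβpos : 0 < β := by
    have := Real.rpow_pos_of_pos hC₁ q
    positivity
  have key1 : ∀ t, T ≤ t → β * t⁻¹ ≤ F'' t := by
    intro t ht
    have ht0 : 0 < t := lt_of_lt_of_le hT ht
    have h1 : (C₁ * t) ^ q ≤ F t ^ q :=
      Real.rpow_le_rpow (by positivity) (hFge t ht0.le) hq0.le
    have h2 : (C₁ * t) ^ q = C₁ ^ q * t ^ q := Real.mul_rpow hC₁.le ht0.le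
    have h3 : t ^ (-1 - q) * t ^ q = t⁻¹ := by
      rw [← Real.rpow_add ht0]
      rw [show (-1 : ℝ) - q + q = -1 by ring, Real.rpow_neg_one]
    calc β * t⁻¹ = δ₀ * t ^ (-1 - q) * (C₁ ^ q * t ^ q) := by
          rw [hβdef, ← h3]; ring
      _ ≤ δ₀ * t ^ (-1 - q) * F t ^ q := by
          rw [← h2]
          have hpos : 0 ≤ δ₀ * t ^ (-1 - q) := by positivity
          exact mul_le_mul_of_nonneg_left h1 hpos
      _ ≤ F'' t := hF'' t ht
  -- Step 2 : F' eventually exceeds any constant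
  have grow : ∀ M : ℝ, ∃ s, T ≤ s ∧ ∀ t, s ≤ t → M ≤ F' t := by
    intro M
    refine ⟨max T (Real.exp ((M - F' T) / β + Real.log T)), le_max_left _ _,
      fun t ht => ?_⟩
    have htT : T ≤ t := le_trans (le_max_left _ _) ht
    have ht0 : 0 < t := lt_of_lt_of_le hT htT
    have hlog : (M - F' T) / β + Real.log T ≤ Real.log t := by
      calc (M - F' T) / β + Real.log T
          = Real.log (Real.exp ((M - F' T) / β + Real.log T)) := (Real.log_exp _).symm
        _ ≤ Real.log t := Real.log_le_log (Real.exp_pos _) (le_trans (le_max_right _ _) ht)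
    have hmono : MonotoneOn (fun u => F' u - β * Real.log u) (Ici T) := by
      apply mono_aux (g := fun u => F'' u - β * u⁻¹)
      · intro u hu
        have hu0 : 0 < u := lt_of_lt_of_le hT hu
        exact (hd2 u hu0.le).sub ((Real.hasDerivAt_log hu0.ne').const_mul β)
      · intro u hu
        have := key1 u hu
        simp only [sub_nonneg]
        linarith
    have h5 : F' T - β * Real.log T ≤ F' t - β * Real.log t :=
      hmono self_mem_Ici (mem_Ici.2 htT) htT
    have h6 : β * ((M - F' T) / β) ≤ β * (Real.log t - Real.log T) := by
      apply mul_le_mul_of_nonneg_left _ hβpos.le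
      linarith
    rw [mul_div_cancel₀ _ hβpos.ne'] at h6
    linarith
  -- Step 3 : F eventually exceeds any linear function
  have hlin : ∀ Θ : ℝ, 0 < Θ → ∃ s, T ≤ s ∧ ∀ t, s ≤ t → Θ * t ≤ F t := by
    intro Θ hΘ
    obtain ⟨s₁, hs₁T, hs₁⟩ := grow (2 * Θ)
    have hs₁0 : 0 < s₁ := lt_of_lt_of_le hT hs₁T
    refine ⟨2 * s₁, by linarith, fun t ht => ?_⟩
    have hts₁ : s₁ ≤ t := by linarith
    have hmono : MonotoneOn (fun u => F u - 2 * Θ * u) (Ici s₁) := by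
      apply mono_aux (g := fun u => F' u - 2 * Θ)
      · intro u hu
        have hu0 : 0 < u := lt_of_lt_of_le hs₁0 hu
        have := (hd1 u hu0.le).sub ((hasDerivAt_id u).const_mul (2 * Θ))
        exact this.congr_deriv (by simp)
      · intro u hu
        have := hs₁ u hu
        simp only [sub_nonneg]
        linarith
    have h5 : F s₁ - 2 * Θ * s₁ ≤ F t - 2 * Θ * t :=
      hmono self_mem_Ici (mem_Ici.2 hts₁) hts₁
    have hFs₁ : 0 < F s₁ := hFpos s₁ hs₁0
    nlinarith
  -- Step 4 : F'' ≥ c t^{-1-p} F^p  on [T, ∞)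
  set p := (q + 1) / 2 with hpdef
  have hp1 : 1 < p := by rw [hpdef]; linarith
  have hqp : 0 < q - p := by rw [hpdef]; linarith
  set c := δ₀ * C₁ ^ (q - p) with hcdef
  have hcpos : 0 < c := by
    have := Real.rpow_pos_of_pos hC₁ (q - p)
    positivity
  have key2 : ∀ t, T ≤ t → c * (t ^ (-1 - p) * F t ^ p) ≤ F'' t := by
    intro t ht
    have ht0 : 0 < t := lt_of_lt_of_le hT ht
    have hFt : 0 < F t := hFpos t ht0
    have h1 : F t ^ q = F t ^ (q - p) * F t ^ p := by
      rw [← Real.rpow_add hFt]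
      congr 1
      ring
    have h2 : (C₁ * t) ^ (q - p) ≤ F t ^ (q - p) :=
      Real.rpow_le_rpow (by positivity) (hFge t ht0.le) hqp.le
    have h3 : (C₁ * t) ^ (q - p) = C₁ ^ (q - p) * t ^ (q - p) :=
      Real.mul_rpow hC₁.le ht0.le
    have h4 : t ^ (-1 - q) * t ^ (q - p) = t ^ (-1 - p) := by
      rw [← Real.rpow_add ht0]
      congr 1
      ring
    have hFp : (0:ℝ) ≤ F t ^ p := Real.rpow_nonneg hFt.le p
    calc c * (t ^ (-1 - p) * F t ^ p)
        = δ₀ * t ^ (-1 - q) * ((C₁ ^ (q - p) * t ^ (q - p)) * F t ^ p) := by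
          rw [hcdef, ← h4]; ring
      _ ≤ δ₀ * t ^ (-1 - q) * (F t ^ (q - p) * F t ^ p) := by
          have hpos : (0:ℝ) ≤ δ₀ * t ^ (-1 - q) := by positivity
          rw [← h3]
          exact mul_le_mul_of_nonneg_left (mul_le_mul_of_nonneg_right h2 hFp) hpos
      _ = δ₀ * t ^ (-1 - q) * F t ^ q := by rw [h1]
      _ ≤ F'' t := hF'' t ht
  -- Step 5 : the energy functional is monotone
  obtain ⟨t₀, ht₀T, ht₀⟩ := grow 1
  have ht₀0 : 0 < t₀ := lt_of_lt_of_le hT ht₀T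
  set a := 2 * c / (p + 1) with hadef
  have hapos : 0 < a := by positivity
  set E := fun u => F' u ^ 2 - a * (u ^ (-1 - p) * F u ^ (p + 1)) with hEdef
  set Ed := fun u => 2 * F' u * F'' u -
      a * ((-1 - p) * u ^ (-1 - p - 1) * F u ^ (p + 1) +
        u ^ (-1 - p) * (F' u * (p + 1) * F u ^ (p + 1 - 1))) with hEddef
  have hEderiv : ∀ u ∈ Ici t₀, HasDerivAt E (Ed u) u := by
    intro u hu
    have hu0 : 0 < u := lt_of_lt_of_le ht₀0 hu
    have hFu : 0 < F u := hFpos u hu0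
    simp only [hEdef, hEddef]
    have h1 : HasDerivAt (fun v => F' v ^ 2) (2 * F' u * F'' u) u := by
      have := (hd2 u hu0.le).pow 2
      exact this.congr_deriv (by simp)
    have h2 : HasDerivAt (fun v : ℝ => v ^ (-1 - p)) ((-1 - p) * u ^ (-1 - p - 1)) u :=
      Real.hasDerivAt_rpow_const (Or.inl hu0.ne')
    have h3 : HasDerivAt (fun v => F v ^ (p + 1))
        (F' u * (p + 1) * F u ^ (p + 1 - 1)) u :=
      (hd1 u hu0.le).rpow_const (Or.inl hFu.ne')
    exact h1.sub ((h2.mul h3).const_mul a)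
  have key3 : ∀ u ∈ Ici t₀, 0 ≤ Ed u := by
    intro u hu
    have hu0 : 0 < u := lt_of_lt_of_le ht₀0 hu
    have hFu : 0 < F u := hFpos u hu0
    have hA1 : 1 ≤ F' u := ht₀ u hu
    have hB : c * (u ^ (-1 - p) * F u ^ p) ≤ F'' u := key2 u (le_trans ht₀T hu)
    have e1 : u ^ (-1 - p - 1) = u ^ (-2 - p) := by congr 1; ring
    have e2 : F u ^ (p + 1) = F u ^ p * F u := Real.rpow_add_one hFu.ne' p
    have e3 : F u ^ (p + 1 - 1) = F u ^ p := by congr 1; ring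
    have hU : (0:ℝ) ≤ u ^ (-1 - p) := Real.rpow_nonneg hu0.le _
    have hV : (0:ℝ) ≤ u ^ (-2 - p) := Real.rpow_nonneg hu0.le _
    have hG : (0:ℝ) ≤ F u ^ p := Real.rpow_nonneg hFu.le _
    have hap : a * (p + 1) = 2 * c := by
      rw [hadef]; field_simp
    have expand : Ed u = 2 * F' u * (F'' u - c * (u ^ (-1 - p) * F u ^ p)) +
        a * (1 + p) * (u ^ (-2 - p) * (F u ^ p * F u)) := by
      simp only [hEddef, e1, e2, e3]
      linear_combination (-(F' u * (u ^ (-1 - p) * F u ^ p))) * hap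
    rw [expand]
    have t1 : (0:ℝ) ≤ 2 * F' u * (F'' u - c * (u ^ (-1 - p) * F u ^ p)) :=
      mul_nonneg (by linarith) (sub_nonneg.2 hB)
    have t2 : (0:ℝ) ≤ a * (1 + p) * (u ^ (-2 - p) * (F u ^ p * F u)) :=
      mul_nonneg (mul_nonneg hapos.le (by linarith)) (mul_nonneg hV (mul_nonneg hG hFu.le))
    linarith
  have hEmono : MonotoneOn E (Ici t₀) := mono_aux hEderiv key3
  -- Step 6 : choice of Θ and t₂
  set m := (p + 1) / 2 with hmdef
  have hm1 : 1 < m := by rw [hmdef]; linarith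
  set κ := Real.sqrt (a / 2) with hκdef
  have hκpos : 0 < κ := Real.sqrt_pos.2 (by positivity)
  have hκsq : κ ^ 2 = a / 2 := Real.sq_sqrt (by positivity)
  set A0 := (2 / a) * max 0 (-(E t₀)) with hA0def
  have hA0 : 0 ≤ A0 := by positivity
  set B0 := 2 / κ with hB0def
  have hB0 : 0 < B0 := by positivity
  set Θ := max 1 (max (A0 ^ (p + 1)⁻¹) (B0 ^ (m - 1)⁻¹)) with hΘdef
  have hΘ1 : 1 ≤ Θ := le_max_left _ _
  have hΘ0 : 0 < Θ := lt_of_lt_of_le one_pos hΘ1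
  have hΘA : A0 ≤ Θ ^ (p + 1) := by
    have h : A0 ^ (p + 1)⁻¹ ≤ Θ :=
      le_trans (le_max_left (A0 ^ (p + 1)⁻¹) (B0 ^ (m - 1)⁻¹)) (le_max_right 1 _)
    exact (Real.rpow_inv_le_iff_of_pos hA0 hΘ0.le (by linarith)).1 h
  have hΘB : B0 ≤ Θ ^ (m - 1) := by
    have h : B0 ^ (m - 1)⁻¹ ≤ Θ :=
      le_trans (le_max_right (A0 ^ (p + 1)⁻¹) (B0 ^ (m - 1)⁻¹)) (le_max_right 1 _)
    exact (Real.rpow_inv_le_iff_of_pos hB0.le hΘ0.le (by linarith)).1 h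
  have hEΘ : 0 ≤ a / 2 * Θ ^ (p + 1) + E t₀ := by
    have h1 : a / 2 * A0 ≤ a / 2 * Θ ^ (p + 1) :=
      mul_le_mul_of_nonneg_left hΘA (by positivity)
    have h2 : a / 2 * A0 = max 0 (-(E t₀)) := by
      rw [hA0def]
      field_simp
    have h3 : -(E t₀) ≤ max 0 (-(E t₀)) := le_max_right _ _
    have h4 : -(E t₀) ≤ a / 2 * Θ ^ (p + 1) := h3.trans (h2 ▸ h1)
    linarith
  obtain ⟨s₂, hs₂T, hs₂⟩ := hlin Θ hΘ0
  set t₂ := max t₀ s₂ with ht₂def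
  have ht₂0 : 0 < t₂ := lt_of_lt_of_le ht₀0 (le_max_left _ _)
  -- Step 7 : first order inequality F' ≥ κ t^{-m} F^m on [t₂, ∞)
  have keyF' : ∀ t, t₂ ≤ t → κ * (t ^ (-m) * F t ^ m) ≤ F' t := by
    intro t ht
    have htt₀ : t₀ ≤ t := le_trans (le_max_left _ _) ht
    have ht0 : 0 < t := lt_of_lt_of_le ht₂0 ht
    have hFt : 0 < F t := hFpos t ht0
    have hF't : 1 ≤ F' t := ht₀ t htt₀
    have hE : E t₀ ≤ E t := hEmono self_mem_Ici (mem_Ici.2 htt₀) htt₀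
    have hΘt : Θ * t ≤ F t := hs₂ t (le_trans (le_max_right _ _) ht)
    have hX : Θ ^ (p + 1) ≤ t ^ (-1 - p) * F t ^ (p + 1) := by
      have h1 : (Θ * t) ^ (p + 1) ≤ F t ^ (p + 1) :=
        Real.rpow_le_rpow (by positivity) hΘt (by linarith)
      have h2 : (Θ * t) ^ (p + 1) = Θ ^ (p + 1) * t ^ (p + 1) :=
        Real.mul_rpow hΘ0.le ht0.le
      have h3 : t ^ (-1 - p) * t ^ (p + 1) = 1 := by
        rw [← Real.rpow_add ht0, show (-1 : ℝ) - p + (p + 1) = 0 by ring, Real.rpow_zero]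
      calc Θ ^ (p + 1) = t ^ (-1 - p) * ((Θ * t) ^ (p + 1)) := by
            rw [h2, ← mul_assoc, mul_comm (t ^ (-1 - p)) (Θ ^ (p + 1)), mul_assoc, h3,
              mul_one]
        _ ≤ t ^ (-1 - p) * F t ^ (p + 1) :=
            mul_le_mul_of_nonneg_left h1 (Real.rpow_nonneg ht0.le _)
    have hsq : (κ * (t ^ (-m) * F t ^ m)) ^ 2 ≤ F' t ^ 2 := by
      have em1 : t ^ (-m) * t ^ (-m) = t ^ (-1 - p) := by
        rw [← Real.rpow_add ht0]
        congr 1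
        rw [hmdef]; ring
      have em2 : F t ^ m * F t ^ m = F t ^ (p + 1) := by
        rw [← Real.rpow_add hFt]
        congr 1
        rw [hmdef]; ring
      have e1 : (κ * (t ^ (-m) * F t ^ m)) ^ 2
          = (a / 2) * (t ^ (-1 - p) * F t ^ (p + 1)) := by
        calc (κ * (t ^ (-m) * F t ^ m)) ^ 2
            = κ ^ 2 * ((t ^ (-m) * t ^ (-m)) * (F t ^ m * F t ^ m)) := by ring
          _ = (a / 2) * (t ^ (-1 - p) * F t ^ (p + 1)) := by rw [hκsq, em1, em2]
      rw [e1]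
      have h4 : a / 2 * Θ ^ (p + 1) ≤ a / 2 * (t ^ (-1 - p) * F t ^ (p + 1)) :=
        mul_le_mul_of_nonneg_left hX (by positivity)
      simp only [hEdef] at hE
      linarith
    have h5 : (0:ℝ) ≤ κ * (t ^ (-m) * F t ^ m) := by
      have w1 : (0:ℝ) ≤ t ^ (-m) := Real.rpow_nonneg ht0.le _
      have w2 : (0:ℝ) ≤ F t ^ m := Real.rpow_nonneg hFt.le _
      positivity
    calc κ * (t ^ (-m) * F t ^ m)
        = Real.sqrt ((κ * (t ^ (-m) * F t ^ m)) ^ 2) := (Real.sqrt_sq h5).symm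
      _ ≤ Real.sqrt (F' t ^ 2) := Real.sqrt_le_sqrt hsq
      _ = F' t := Real.sqrt_sq (by linarith)
  -- Step 8 : W + γ log is antitone on [t₂, ∞)
  set γ := (m - 1) * κ / 2 with hγdef
  have hγpos : 0 < γ := by
    have hm' : 0 < m - 1 := by linarith
    positivity
  set Wg := fun u => (F u / u) ^ (1 - m) + γ * Real.log u with hWgdef
  set Wd := fun u => (F' u * u - F u * 1) / u ^ 2 * (1 - m) * (F u / u) ^ (1 - m - 1) +
    γ * u⁻¹ with hWddef
  have hWderiv : ∀ u ∈ Ici t₂, HasDerivAt Wg (Wd u) u := by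
    intro u hu
    have hu0 : 0 < u := lt_of_lt_of_le ht₂0 hu
    have hFu : 0 < F u := hFpos u hu0
    simp only [hWgdef, hWddef]
    have hZ : HasDerivAt (fun v => F v / v) ((F' u * u - F u * 1) / u ^ 2) u :=
      (hd1 u hu0.le).div (hasDerivAt_id u) hu0.ne'
    have hZpos : 0 < F u / u := by positivity
    have h1 : HasDerivAt (fun v => (F v / v) ^ (1 - m))
        ((F' u * u - F u * 1) / u ^ 2 * (1 - m) * (F u / u) ^ (1 - m - 1)) u :=
      hZ.rpow_const (Or.inl hZpos.ne')
    exact h1.add ((Real.hasDerivAt_log hu0.ne').const_mul γ)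
  have hWd : ∀ u ∈ Ici t₂, Wd u ≤ 0 := by
    intro u hu
    have hu0 : 0 < u := lt_of_lt_of_le ht₂0 hu
    have hFu : 0 < F u := hFpos u hu0
    set Z := F u / u with hZdef
    have hZpos : 0 < Z := by rw [hZdef]; positivity
    have hΘZ : Θ ≤ Z := by
      rw [hZdef, le_div_iff₀ hu0]
      exact hs₂ u (le_trans (le_max_right _ _) hu)
    have hZn : 0 < Z ^ (-m) := Real.rpow_pos_of_pos hZpos _
    have rel1 : Z ^ m * Z ^ (-m) = 1 := by
      rw [← Real.rpow_add hZpos, show m + -m = 0 by ring, Real.rpow_zero]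
    have rel2 : Z ^ (1 - m) = Z * Z ^ (-m) := by
      rw [show (1:ℝ) - m = 1 + -m by ring, Real.rpow_add hZpos, Real.rpow_one]
    have rel4 : u ^ (-m) * F u ^ m = Z ^ m := by
      rw [hZdef, Real.div_rpow hFu.le hu0.le, Real.rpow_neg hu0.le]
      ring
    have rel3 : Z ^ (1 - m) ≤ κ / 2 := by
      have h1 : Z ^ (1 - m) ≤ Θ ^ (1 - m) :=
        Real.rpow_le_rpow_of_nonpos hΘ0 hΘZ (by linarith)
      have h2 : Θ ^ (1 - m) = (Θ ^ (m - 1))⁻¹ := by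
        rw [show (1 : ℝ) - m = -(m - 1) by ring, Real.rpow_neg hΘ0.le]
      have h3 : (Θ ^ (m - 1))⁻¹ ≤ B0⁻¹ := by
        apply inv_anti₀ hB0 hΘB
      have h4 : B0⁻¹ = κ / 2 := by
        rw [hB0def, inv_div]
      linarith
    have hF' : κ * Z ^ m ≤ F' u := by
      have := keyF' u hu
      rwa [rel4] at this
    have hD : (F' u * u - F u * 1) / u ^ 2 = (F' u - Z) / u := by
      rw [hZdef]
      field_simp
      try simp
    have hexp : (1:ℝ) - m - 1 = -m := by ring
    simp only [hWddef, hD, hexp, ← hZdef]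
    have hN : (1 - m) * Z ^ (-m) ≤ 0 :=
      mul_nonpos_of_nonpos_of_nonneg (by linarith) hZn.le
    have step1 : (F' u - Z) / u * (1 - m) * Z ^ (-m)
        = ((F' u - Z) * ((1 - m) * Z ^ (-m))) / u := by ring
    have step2 : (F' u - Z) * ((1 - m) * Z ^ (-m))
        ≤ (κ * Z ^ m - Z) * ((1 - m) * Z ^ (-m)) :=
      mul_le_mul_of_nonpos_right (by linarith) hN
    have step3 : (κ * Z ^ m - Z) * ((1 - m) * Z ^ (-m)) = (κ - Z ^ (1 - m)) * (1 - m) := by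
      linear_combination ((1 - m) * κ) * rel1 + (1 - m) * rel2
    have step4 : (κ - Z ^ (1 - m)) * (1 - m) ≤ (κ / 2) * (1 - m) := by
      apply mul_le_mul_of_nonpos_right _ (by linarith)
      linarith
    have step5 : (κ / 2) * (1 - m) = -γ := by rw [hγdef]; ring
    have chain : (F' u - Z) * ((1 - m) * Z ^ (-m)) ≤ -γ := by
      calc (F' u - Z) * ((1 - m) * Z ^ (-m))
          ≤ (κ * Z ^ m - Z) * ((1 - m) * Z ^ (-m)) := step2
        _ = (κ - Z ^ (1 - m)) * (1 - m) := step3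
        _ ≤ (κ / 2) * (1 - m) := step4
        _ = -γ := step5
    rw [step1]
    have hdiv : ((F' u - Z) * ((1 - m) * Z ^ (-m))) / u ≤ (-γ) / u :=
      (div_le_div_iff_of_pos_right hu0).2 chain
    have hfin : (-γ) / u + γ * u⁻¹ = 0 := by
      field_simp
      ring
    linarith
  have hWanti : AntitoneOn Wg (Ici t₂) := anti_aux hWderiv hWd
  -- Step 9 : contradiction
  set t₃ := max t₂ (Real.exp (Wg t₂ / γ)) with ht₃def
  have ht₃2 : t₂ ≤ t₃ := le_max_left _ _
  have ht₃0 : 0 < t₃ := lt_of_lt_of_le ht₂0 ht₃2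
  have hWle : Wg t₃ ≤ Wg t₂ := hWanti self_mem_Ici (mem_Ici.2 ht₃2) ht₃2
  have hlog : Wg t₂ / γ ≤ Real.log t₃ := by
    calc Wg t₂ / γ = Real.log (Real.exp (Wg t₂ / γ)) := (Real.log_exp _).symm
      _ ≤ Real.log t₃ := Real.log_le_log (Real.exp_pos _) (le_max_right _ _)
  have h7 : γ * (Wg t₂ / γ) ≤ γ * Real.log t₃ := mul_le_mul_of_nonneg_left hlog hγpos.le
  rw [mul_div_cancel₀ _ hγpos.ne'] at h7
  have hWpos : 0 < (F t₃ / t₃) ^ (1 - m) := by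
    have hFt₃ : 0 < F t₃ := hFpos t₃ ht₃0
    exact Real.rpow_pos_of_pos (by positivity) _
  have hWgt₃ : Wg t₃ = (F t₃ / t₃) ^ (1 - m) + γ * Real.log t₃ := by rw [hWgdef]
  clear_value t₃ Wg Wd γ m κ Θ B0 A0 E Ed a t₂
  linarith
end
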